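/- arXiv:1911.06927 — 12 statements merged into one kernel-verified Lean document; each statement's English description precedes it below -/
import Mathlib

section
/- Let z : ℝ² → ℝ be a smooth function satisfying the KdV equation z_t = z_{xxx} + 6 z z_x, and let η ∈ ℝ. Define f11 = 1 − z, f12 = −z_{xx} + η z_x − η² z − 2z² + η² + 2z, f21 = η, f22 = η³ + 2η z − 2 z_x, f31 = −(1+z), f32 = −z_{xx} + η z_x − η² z − 2z² − η² − 2z, all evaluated along z. Then the three pseudospherical structure-equation identities hold: D_x f12 − D_t f11 = f31 f22 − f32 f21, D_x f22 − D_t f21 = f11 f32 − f12 f31, D_x f32 − D_t f31 = f11 f22 − f12 f21. -/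
noncomputable def Dx (f : ℝ → ℝ → ℝ) : ℝ → ℝ → ℝ := fun x t => deriv (fun s => f s t) x

noncomputable def Dt (f : ℝ → ℝ → ℝ) : ℝ → ℝ → ℝ := fun x t => deriv (fun s => f x s) t

lemma Dx_rep (z : ℝ → ℝ → ℝ) (hz : ContDiff ℝ (⊤ : ℕ∞) fun p : ℝ × ℝ => z p.1 p.2) :
    (ContDiff ℝ (⊤ : ℕ∞) fun p : ℝ × ℝ => Dx z p.1 p.2) ∧
    ∀ x t, HasDerivAt (fun s => z s t) (Dx z x t) x := by
  have hd : ∀ x t : ℝ, HasDerivAt (fun s => z s t)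
      (fderiv ℝ (fun p : ℝ × ℝ => z p.1 p.2) (x, t) (1, 0)) x := by
    intro x t
    have h1 : HasDerivAt (fun s : ℝ => (s, t)) ((1:ℝ), (0:ℝ)) x :=
      (hasDerivAt_id x).prodMk (hasDerivAt_const x t)
    exact ((hz.differentiable (by simp) (x, t)).hasFDerivAt.comp_hasDerivAt x h1)
  have heq : ∀ x t, Dx z x t = fderiv ℝ (fun p : ℝ × ℝ => z p.1 p.2) (x, t) (1, 0) :=
    fun x t => (hd x t).deriv
  refine ⟨?_, fun x t => heq x t ▸ hd x t⟩
  have h2 : ContDiff ℝ (⊤ : ℕ∞) fun p : ℝ × ℝ =>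
      fderiv ℝ (fun q : ℝ × ℝ => z q.1 q.2) p (1, 0) :=
    (hz.fderiv_right (by simp)).clm_apply contDiff_const
  convert h2 using 2 with p
  exact heq p.1 p.2

lemma Dt_rep (z : ℝ → ℝ → ℝ) (hz : ContDiff ℝ (⊤ : ℕ∞) fun p : ℝ × ℝ => z p.1 p.2) :
    ∀ x t, HasDerivAt (fun s => z x s) (Dt z x t) t := by
  intro x t
  have h1 : HasDerivAt (fun s : ℝ => (x, s)) ((0:ℝ), (1:ℝ)) t :=
    (hasDerivAt_const t x).prodMk (hasDerivAt_id t)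
  have hd : HasDerivAt (fun s => z x s)
      (fderiv ℝ (fun p : ℝ × ℝ => z p.1 p.2) (x, t) (0, 1)) t :=
    (hz.differentiable (by simp) (x, t)).hasFDerivAt.comp_hasDerivAt t h1
  have heq : Dt z x t = fderiv ℝ (fun p : ℝ × ℝ => z p.1 p.2) (x, t) (0, 1) := hd.deriv
  exact heq ▸ hd

/-- The KdV equation `z_t = z_{xxx} + 6 z z_x` describes pseudospherical surfaces. -/
theorem kdv_describes_pss (z : ℝ → ℝ → ℝ)
    (hz : ContDiff ℝ (⊤ : ℕ∞) fun p : ℝ × ℝ => z p.1 p.2)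
    (η : ℝ)
    (hKdV : ∀ x t, Dt z x t = Dx (Dx (Dx z)) x t + 6 * z x t * Dx z x t) :
    let f11 : ℝ → ℝ → ℝ := fun x t => 1 - z x t
    let f12 : ℝ → ℝ → ℝ := fun x t =>
      -Dx (Dx z) x t + η * Dx z x t - η ^ 2 * z x t - 2 * (z x t) ^ 2 + η ^ 2 + 2 * z x t
    let f21 : ℝ → ℝ → ℝ := fun _ _ => η
    let f22 : ℝ → ℝ → ℝ := fun x t => η ^ 3 + 2 * η * z x t - 2 * Dx z x t
    let f31 : ℝ → ℝ → ℝ := fun x t => -(1 + z x t)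
    let f32 : ℝ → ℝ → ℝ := fun x t =>
      -Dx (Dx z) x t + η * Dx z x t - η ^ 2 * z x t - 2 * (z x t) ^ 2 - η ^ 2 - 2 * z x t
    ∀ x t : ℝ,
      Dx f12 x t - Dt f11 x t = f31 x t * f22 x t - f32 x t * f21 x t ∧
      Dx f22 x t - Dt f21 x t = f11 x t * f32 x t - f12 x t * f31 x t ∧
      Dx f32 x t - Dt f31 x t = f11 x t * f22 x t - f12 x t * f21 x t := by
  intro f11 f12 f21 f22 f31 f32 x t
  obtain ⟨hz1, h0⟩ := Dx_rep z hz
  obtain ⟨hz2, h1⟩ := Dx_rep (Dx z) hz1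
  obtain ⟨_, h2⟩ := Dx_rep (Dx (Dx z)) hz2
  have ht := Dt_rep z hz
  set u1 := Dx z
  set u2 := Dx (Dx z)
  set u3 := Dx (Dx (Dx z))
  -- Dt f11 and Dt f31
  have hDt11 : Dt f11 x t = -(Dt z x t) := by
    have : HasDerivAt (fun s => f11 x s) (-(Dt z x t)) t :=
      (ht x t).const_sub 1
    exact this.deriv
  have hDt31 : Dt f31 x t = -(Dt z x t) := by
    have : HasDerivAt (fun s => f31 x s) (-(Dt z x t)) t :=
      ((ht x t).const_add 1).neg
    exact this.deriv
  have hDt21 : Dt f21 x t = 0 := by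
    have : HasDerivAt (fun s => f21 x s) 0 t := hasDerivAt_const t η
    exact this.deriv
  -- Dx f12
  have hDx12 : Dx f12 x t =
      -u3 x t + η * u2 x t - η ^ 2 * u1 x t
        - 2 * (2 * z x t ^ 1 * u1 x t) + 2 * u1 x t := by
    have : HasDerivAt (fun s => f12 s t)
        (-u3 x t + η * u2 x t - η ^ 2 * u1 x t
          - 2 * (((2:ℕ):ℝ) * z x t ^ (2 - 1) * u1 x t) + 2 * u1 x t) x := by
      exact ((((((h2 x t).neg).add ((h1 x t).const_mul η)).sub
        ((h0 x t).const_mul (η ^ 2))).sub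
        (((h0 x t).pow 2).const_mul 2)).add_const (η ^ 2)).add
        ((h0 x t).const_mul 2)
    simpa [Dx] using this.deriv
  have hDx32 : Dx f32 x t =
      -u3 x t + η * u2 x t - η ^ 2 * u1 x t
        - 2 * (2 * z x t ^ 1 * u1 x t) - 2 * u1 x t := by
    have : HasDerivAt (fun s => f32 s t)
        (-u3 x t + η * u2 x t - η ^ 2 * u1 x t
          - 2 * (((2:ℕ):ℝ) * z x t ^ (2 - 1) * u1 x t) - 2 * u1 x t) x := by
      exact ((((((h2 x t).neg).add ((h1 x t).const_mul η)).sub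
        ((h0 x t).const_mul (η ^ 2))).sub
        (((h0 x t).pow 2).const_mul 2)).sub_const (η ^ 2)).sub
        ((h0 x t).const_mul 2)
    simpa [Dx] using this.deriv
  have hDx22 : Dx f22 x t = 2 * η * u1 x t - 2 * u2 x t := by
    have : HasDerivAt (fun s => f22 s t)
        (0 + 2 * η * u1 x t - 2 * u2 x t) x := by
      exact ((hasDerivAt_const x (η ^ 3)).add
        ((h0 x t).const_mul (2 * η))).sub ((h1 x t).const_mul 2)
    simpa [Dx] using this.deriv
  have hk := hKdV x t
  refine ⟨?_, ?_, ?_⟩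
  · simp only [hDx12, hDt11, f31, f22, f32, f21]
    rw [hk]; ring
  · simp only [hDx22, hDt21, f11, f32, f12, f31]
    ring
  · simp only [hDx32, hDt31, f11, f22, f12, f21]
    rw [hk]; ring
end

section
/- Let m ∈ ℝ, δ = ±1, λ ≠ 0, and let z : ℝ² → ℝ be a smooth function satisfying the generalized short-pulse equation z_{tt} = (2δ/(z²+m)) z_{xt} − (2z/(z²+m))(z_t² + 1), with z² + m nonvanishing. Define f11 = (λ/2) δ (z²+m) z_t, f12 = λ z_t, f21 = (δλ/2)(z²+m) + 1/λ, f22 = λ, f31 = δ z, f32 = 0. Then the structure-equation identities hold: D_x f12 − D_t f11 = f31 f22 − f32 f21, D_x f22 − D_t f21 = f11 f32 − f12 f31, and D_x f32 − D_t f31 = δ (f11 f22 − f12 f21). -/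
lemma hasDerivAt_slice1 {E : Type*} [NormedAddCommGroup E] [NormedSpace ℝ E]
    {G : ℝ × ℝ → E} {x t : ℝ} (hG : DifferentiableAt ℝ G (x, t)) :
    HasDerivAt (fun s => G (s, t)) (fderiv ℝ G (x, t) (1, 0)) x := by
  have hline : HasDerivAt (fun s : ℝ => ((s : ℝ), t)) ((1 : ℝ), (0 : ℝ)) x :=
    (hasDerivAt_id x).prodMk (hasDerivAt_const x t)
  exact hG.hasFDerivAt.comp_hasDerivAt x hline

lemma hasDerivAt_slice2 {E : Type*} [NormedAddCommGroup E] [NormedSpace ℝ E]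
    {G : ℝ × ℝ → E} {x t : ℝ} (hG : DifferentiableAt ℝ G (x, t)) :
    HasDerivAt (fun s => G (x, s)) (fderiv ℝ G (x, t) (0, 1)) t := by
  have hline : HasDerivAt (fun s : ℝ => (x, (s : ℝ))) ((0 : ℝ), (1 : ℝ)) t :=
    (hasDerivAt_const t x).prodMk (hasDerivAt_id t)
  exact hG.hasFDerivAt.comp_hasDerivAt t hline

/-- The generalized short-pulse equation describes pss (δ=1) or ss (δ=−1). -/
theorem generalized_short_pulse_describes_pss_ss (m δ lam : ℝ)
    (hδ : δ = 1 ∨ δ = -1) (hlam : lam ≠ 0)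
    (z : ℝ → ℝ → ℝ) (hz : ContDiff ℝ (⊤ : ℕ∞) fun p : ℝ × ℝ => z p.1 p.2)
    (hden : ∀ x t, (z x t) ^ 2 + m ≠ 0)
    (hPDE : ∀ x t, Dt (Dt z) x t =
      (2 * δ / ((z x t) ^ 2 + m)) * Dt (Dx z) x t
        - (2 * z x t / ((z x t) ^ 2 + m)) * ((Dt z x t) ^ 2 + 1)) :
    let f11 : ℝ → ℝ → ℝ := fun x t => (lam / 2) * δ * ((z x t) ^ 2 + m) * Dt z x t
    let f12 : ℝ → ℝ → ℝ := fun x t => lam * Dt z x t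
    let f21 : ℝ → ℝ → ℝ := fun x t => (δ * lam / 2) * ((z x t) ^ 2 + m) + 1 / lam
    let f22 : ℝ → ℝ → ℝ := fun _ _ => lam
    let f31 : ℝ → ℝ → ℝ := fun x t => δ * z x t
    let f32 : ℝ → ℝ → ℝ := fun _ _ => 0
    ∀ x t : ℝ,
      Dx f12 x t - Dt f11 x t = f31 x t * f22 x t - f32 x t * f21 x t ∧
      Dx f22 x t - Dt f21 x t = f11 x t * f32 x t - f12 x t * f31 x t ∧
      Dx f32 x t - Dt f31 x t = δ * (f11 x t * f22 x t - f12 x t * f21 x t) := by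
  intro f11 f12 f21 f22 f31 f32 x t
  set F : ℝ × ℝ → ℝ := fun p : ℝ × ℝ => z p.1 p.2 with hF
  have hFd : Differentiable ℝ F := hz.differentiable (by simp)
  set F' : ℝ × ℝ → ℝ × ℝ →L[ℝ] ℝ := fderiv ℝ F with hF'def
  have hF'c : ContDiff ℝ (⊤ : ℕ∞) F' := hz.fderiv_right (by simp)
  have hF'd : Differentiable ℝ F' := hF'c.differentiable (by simp)
  -- first derivatives
  have hDt : ∀ a b : ℝ, Dt z a b = F' (a, b) (0, 1) := fun a b =>
    (hasDerivAt_slice2 (hFd (a, b))).deriv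
  have hDx : ∀ a b : ℝ, Dx z a b = F' (a, b) (1, 0) := fun a b =>
    (hasDerivAt_slice1 (hFd (a, b))).deriv
  -- derivatives of partial derivatives
  have key1 : ∀ (a b : ℝ) (v : ℝ × ℝ),
      HasDerivAt (fun s => F' (s, b) v) (fderiv ℝ F' (a, b) (1, 0) v) a := by
    intro a b v
    have h := ((ContinuousLinearMap.apply ℝ ℝ v).hasFDerivAt.comp (a, b)
      (hF'd (a, b)).hasFDerivAt)
    have hline : HasDerivAt (fun s : ℝ => ((s : ℝ), b)) ((1 : ℝ), (0 : ℝ)) a :=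
      (hasDerivAt_id a).prodMk (hasDerivAt_const a b)
    exact h.comp_hasDerivAt a hline
  have key2 : ∀ (a b : ℝ) (v : ℝ × ℝ),
      HasDerivAt (fun s => F' (a, s) v) (fderiv ℝ F' (a, b) (0, 1) v) b := by
    intro a b v
    have h := ((ContinuousLinearMap.apply ℝ ℝ v).hasFDerivAt.comp (a, b)
      (hF'd (a, b)).hasFDerivAt)
    have hline : HasDerivAt (fun s : ℝ => (a, (s : ℝ))) ((0 : ℝ), (1 : ℝ)) b :=
      (hasDerivAt_const b a).prodMk (hasDerivAt_id b)
    exact h.comp_hasDerivAt b hline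
  -- symmetry of second derivatives
  have hsymm : fderiv ℝ F' (x, t) (1, 0) (0, 1) = fderiv ℝ F' (x, t) (0, 1) (1, 0) :=
    second_derivative_symmetric (fun y => (hFd y).hasFDerivAt)
      (hF'd (x, t)).hasFDerivAt (1, 0) (0, 1)
  -- second partial derivatives
  have hDxDt : Dx (Dt z) x t = fderiv ℝ F' (x, t) (1, 0) (0, 1) := by
    have : (fun s => Dt z s t) = fun s => F' (s, t) (0, 1) := funext fun s => hDt s t
    show deriv (fun s => Dt z s t) x = _
    rw [this]; exact (key1 x t (0, 1)).deriv
  have hDtDx : Dt (Dx z) x t = fderiv ℝ F' (x, t) (0, 1) (1, 0) := by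
    have : (fun s => Dx z x s) = fun s => F' (x, s) (1, 0) := funext fun s => hDx x s
    show deriv (fun s => Dx z x s) t = _
    rw [this]; exact (key2 x t (1, 0)).deriv
  have hDtDt : Dt (Dt z) x t = fderiv ℝ F' (x, t) (0, 1) (0, 1) := by
    have : (fun s => Dt z x s) = fun s => F' (x, s) (0, 1) := funext fun s => hDt x s
    show deriv (fun s => Dt z x s) t = _
    rw [this]; exact (key2 x t (0, 1)).deriv
  have hmix : Dx (Dt z) x t = Dt (Dx z) x t := by rw [hDxDt, hDtDx, hsymm]
  -- basic HasDerivAt facts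
  have hz_t : HasDerivAt (fun s => z x s) (Dt z x t) t := by
    rw [hDt]; exact hasDerivAt_slice2 (hFd (x, t))
  have hzt_t : HasDerivAt (fun s => Dt z x s) (Dt (Dt z) x t) t := by
    have : (fun s => Dt z x s) = fun s => F' (x, s) (0, 1) := funext fun s => hDt x s
    rw [this, hDtDt]; exact key2 x t (0, 1)
  have hzt_x : HasDerivAt (fun s => Dt z s t) (Dx (Dt z) x t) x := by
    have : (fun s => Dt z s t) = fun s => F' (s, t) (0, 1) := funext fun s => hDt s t
    rw [this, hDxDt]; exact key1 x t (0, 1)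
  -- compute the various total derivatives
  have hDxf12 : Dx f12 x t = lam * Dx (Dt z) x t := (hzt_x.const_mul lam).deriv
  have hDtf11 : Dt f11 x t =
      (lam / 2) * δ * ((2 : ℝ) * z x t ^ 1 * Dt z x t) * Dt z x t
        + (lam / 2) * δ * ((z x t) ^ 2 + m) * Dt (Dt z) x t := by
    have h1 : HasDerivAt (fun s => (lam / 2) * δ * ((z x s) ^ 2 + m))
        ((lam / 2) * δ * ((2 : ℝ) * z x t ^ 1 * Dt z x t)) t := by
      simpa using (((hz_t.pow 2).add_const m).const_mul ((lam / 2) * δ))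
    exact (h1.mul hzt_t).deriv
  have hDxf22 : Dx f22 x t = 0 := deriv_const x lam
  have hDtf21 : Dt f21 x t = (δ * lam / 2) * ((2 : ℝ) * z x t ^ 1 * Dt z x t) := by
    have h1 : HasDerivAt (fun s => (δ * lam / 2) * ((z x s) ^ 2 + m) + 1 / lam)
        ((δ * lam / 2) * ((2 : ℝ) * z x t ^ 1 * Dt z x t)) t := by
      simpa using ((((hz_t.pow 2).add_const m).const_mul (δ * lam / 2)).add_const (1 / lam))
    exact h1.deriv
  have hDxf32 : Dx f32 x t = 0 := deriv_const x 0
  have hDtf31 : Dt f31 x t = δ * Dt z x t := (hz_t.const_mul δ).deriv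
  have hδ2 : δ ^ 2 = 1 := by rcases hδ with h | h <;> rw [h] <;> norm_num
  have hden' := hden x t
  have hP := hPDE x t
  refine ⟨?_, ?_, ?_⟩
  · show Dx f12 x t - Dt f11 x t = δ * z x t * lam - 0 * _
    rw [hDxf12, hDtf11, hmix, hP]
    rcases hδ with h | h <;> subst h <;> field_simp <;> ring
  · show Dx f22 x t - Dt f21 x t = _ * 0 - lam * Dt z x t * (δ * z x t)
    rw [hDxf22, hDtf21]; ring
  · show Dx f32 x t - Dt f31 x t =
      δ * ((lam / 2) * δ * ((z x t) ^ 2 + m) * Dt z x t * lam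
        - lam * Dt z x t * ((δ * lam / 2) * ((z x t) ^ 2 + m) + 1 / lam))
    rw [hDxf32, hDtf31]
    field_simp
    ring
end

section
/- Let m ∈ ℝ, δ = ±1, η ≠ 0 with η² + δ > 0, and let z : ℝ² → ℝ be a smooth function with z > max(0, m) satisfying the generalized constant astigmatism equation z_{tt} = z_{xx}/z² − ((4z−3m)/(2(z−m)z³)) z_x² + (m/(2(z−m)z)) z_t² − 2 + 2m/z. Define f11 = (η z z_t + √(η²+δ) z_x)/(2√(z(z−m))), f12 = (η z_x + √(η²+δ) z z_t)/(2 z √(z(z−m))), f21 = √(z(η²+δ)), f22 = η/√z, f31 = √(z−m), f32 = 0. Then the three structure-equation identities hold: D_x f12 − D_t f11 = f31 f22 − f32 f21, D_x f22 − D_t f21 = f11 f32 − f12 f31, D_x f32 − D_t f31 = δ (f11 f22 − f12 f21). -/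
lemma partialX (F : ℝ × ℝ → ℝ) (hF : Differentiable ℝ F) (x t : ℝ) :
    HasDerivAt (fun s => F (s, t)) (fderiv ℝ F (x, t) (1, 0)) x :=
  (hF (x, t)).hasFDerivAt.comp_hasDerivAt x
    ((hasDerivAt_id x).prodMk (hasDerivAt_const x t))

lemma partialT (F : ℝ × ℝ → ℝ) (hF : Differentiable ℝ F) (x t : ℝ) :
    HasDerivAt (fun s => F (x, s)) (fderiv ℝ F (x, t) (0, 1)) t :=
  (hF (x, t)).hasFDerivAt.comp_hasDerivAt t
    ((hasDerivAt_const t x).prodMk (hasDerivAt_id t))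

lemma hasDerivAt_Dx (z : ℝ → ℝ → ℝ) (hz : ContDiff ℝ (⊤ : ℕ∞) fun p : ℝ × ℝ => z p.1 p.2)
    (x t : ℝ) : HasDerivAt (fun s => z s t) (Dx z x t) x := by
  have h := partialX _ (hz.differentiable (by simp)) x t
  have e : Dx z x t = fderiv ℝ (fun p : ℝ × ℝ => z p.1 p.2) (x, t) (1, 0) := h.deriv
  rw [e]; exact h

lemma hasDerivAt_Dt (z : ℝ → ℝ → ℝ) (hz : ContDiff ℝ (⊤ : ℕ∞) fun p : ℝ × ℝ => z p.1 p.2)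
    (x t : ℝ) : HasDerivAt (fun s => z x s) (Dt z x t) t := by
  have h := partialT _ (hz.differentiable (by simp)) x t
  have e : Dt z x t = fderiv ℝ (fun p : ℝ × ℝ => z p.1 p.2) (x, t) (0, 1) := h.deriv
  rw [e]; exact h

lemma contDiff_Dx (z : ℝ → ℝ → ℝ) (hz : ContDiff ℝ (⊤ : ℕ∞) fun p : ℝ × ℝ => z p.1 p.2) :
    ContDiff ℝ (⊤ : ℕ∞) fun p : ℝ × ℝ => Dx z p.1 p.2 := by
  have e : (fun p : ℝ × ℝ => Dx z p.1 p.2)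
      = fun p : ℝ × ℝ => fderiv ℝ (fun q : ℝ × ℝ => z q.1 q.2) p (1, 0) := by
    funext p
    exact (partialX _ (hz.differentiable (by simp)) p.1 p.2).deriv
  rw [e]
  exact (hz.fderiv_right (by simp)).clm_apply contDiff_const

lemma contDiff_Dt (z : ℝ → ℝ → ℝ) (hz : ContDiff ℝ (⊤ : ℕ∞) fun p : ℝ × ℝ => z p.1 p.2) :
    ContDiff ℝ (⊤ : ℕ∞) fun p : ℝ × ℝ => Dt z p.1 p.2 := by
  have e : (fun p : ℝ × ℝ => Dt z p.1 p.2)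
      = fun p : ℝ × ℝ => fderiv ℝ (fun q : ℝ × ℝ => z q.1 q.2) p (0, 1) := by
    funext p
    exact (partialT _ (hz.differentiable (by simp)) p.1 p.2).deriv
  rw [e]
  exact (hz.fderiv_right (by simp)).clm_apply contDiff_const

lemma mixed_symm (z : ℝ → ℝ → ℝ) (hz : ContDiff ℝ (⊤ : ℕ∞) fun p : ℝ × ℝ => z p.1 p.2)
    (x t : ℝ) : Dx (Dt z) x t = Dt (Dx z) x t := by
  set Z : ℝ × ℝ → ℝ := fun p => z p.1 p.2 with hZ
  have hd : ∀ y, HasFDerivAt Z (fderiv ℝ Z y) y := fun y =>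
    (hz.differentiable (by simp) y).hasFDerivAt
  have hd2 : HasFDerivAt (fderiv ℝ Z) (fderiv ℝ (fderiv ℝ Z) (x, t)) (x, t) :=
    (((hz.fderiv_right (m := 1) (by exact WithTop.coe_le_coe.mpr le_top)).differentiable (by simp)) (x, t)).hasFDerivAt
  have symm := second_derivative_symmetric hd hd2
  have e1 : Dx (Dt z) x t = fderiv ℝ (fderiv ℝ Z) (x, t) (1, 0) (0, 1) := by
    have hG : HasFDerivAt (fun p => fderiv ℝ Z p ((0:ℝ), (1:ℝ)))
        ((ContinuousLinearMap.apply ℝ ℝ ((0:ℝ), (1:ℝ))).comp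
          (fderiv ℝ (fderiv ℝ Z) (x, t))) (x, t) :=
      (ContinuousLinearMap.apply ℝ ℝ ((0:ℝ), (1:ℝ))).hasFDerivAt.comp (x, t) hd2
    have h := hG.comp_hasDerivAt x ((hasDerivAt_id x).prodMk (hasDerivAt_const x t))
    have e : (fun s => Dt z s t) = fun s => fderiv ℝ Z (s, t) ((0:ℝ), (1:ℝ)) := by
      funext s
      exact (partialT _ (hz.differentiable (by simp)) s t).deriv
    show deriv (fun s => Dt z s t) x = _
    rw [e]
    exact h.deriv
  have e2 : Dt (Dx z) x t = fderiv ℝ (fderiv ℝ Z) (x, t) (0, 1) (1, 0) := by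
    have hG : HasFDerivAt (fun p => fderiv ℝ Z p ((1:ℝ), (0:ℝ)))
        ((ContinuousLinearMap.apply ℝ ℝ ((1:ℝ), (0:ℝ))).comp
          (fderiv ℝ (fderiv ℝ Z) (x, t))) (x, t) :=
      (ContinuousLinearMap.apply ℝ ℝ ((1:ℝ), (0:ℝ))).hasFDerivAt.comp (x, t) hd2
    have h := hG.comp_hasDerivAt t ((hasDerivAt_const t x).prodMk (hasDerivAt_id t))
    have e : (fun s => Dx z x s) = fun s => fderiv ℝ Z (x, s) ((1:ℝ), (0:ℝ)) := by
      funext s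
      exact (partialX _ (hz.differentiable (by simp)) x s).deriv
    show deriv (fun s => Dx z x s) t = _
    rw [e]
    exact h.deriv
  rw [e1, e2, symm]

/-- The generalized constant astigmatism equation describes pss (δ=1) or ss (δ=−1). -/
theorem generalized_constant_astigmatism_describes_pss_ss (m δ η : ℝ)
    (hδ : δ = 1 ∨ δ = -1) (hη : η ≠ 0) (hηδ : η ^ 2 + δ > 0)
    (z : ℝ → ℝ → ℝ) (hz : ContDiff ℝ (⊤ : ℕ∞) fun p : ℝ × ℝ => z p.1 p.2)
    (hpos : ∀ x t, z x t > max 0 m)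
    (hPDE : ∀ x t, Dt (Dt z) x t =
      Dx (Dx z) x t / (z x t) ^ 2
        - ((4 * z x t - 3 * m) / (2 * (z x t - m) * (z x t) ^ 3)) * (Dx z x t) ^ 2
        + (m / (2 * (z x t - m) * z x t)) * (Dt z x t) ^ 2
        - 2 + 2 * m / z x t) :
    let f11 : ℝ → ℝ → ℝ := fun x t =>
      (η * z x t * Dt z x t + Real.sqrt (η ^ 2 + δ) * Dx z x t)
        / (2 * Real.sqrt (z x t * (z x t - m)))
    let f12 : ℝ → ℝ → ℝ := fun x t =>
      (η * Dx z x t + Real.sqrt (η ^ 2 + δ) * z x t * Dt z x t)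
        / (2 * Real.sqrt (z x t * (z x t - m)) * z x t)
    let f21 : ℝ → ℝ → ℝ := fun x t => Real.sqrt (z x t * (η ^ 2 + δ))
    let f22 : ℝ → ℝ → ℝ := fun x t => η / Real.sqrt (z x t)
    let f31 : ℝ → ℝ → ℝ := fun x t => Real.sqrt (z x t - m)
    let f32 : ℝ → ℝ → ℝ := fun _ _ => 0
    ∀ x t : ℝ,
      Dx f12 x t - Dt f11 x t = f31 x t * f22 x t - f32 x t * f21 x t ∧
      Dx f22 x t - Dt f21 x t = f11 x t * f32 x t - f12 x t * f31 x t ∧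
      Dx f32 x t - Dt f31 x t = δ * (f11 x t * f22 x t - f12 x t * f21 x t) := by
  intro f11 f12 f21 f22 f31 f32 x t
  have hmax := hpos x t
  have ha : (0:ℝ) < z x t := lt_of_le_of_lt (le_max_left 0 m) hmax
  have hb : (0:ℝ) < z x t - m := sub_pos.mpr (lt_of_le_of_lt (le_max_right 0 m) hmax)
  have hKpos : (0:ℝ) < Real.sqrt (η ^ 2 + δ) := Real.sqrt_pos.mpr hηδ
  have hsa : (0:ℝ) < Real.sqrt (z x t) := Real.sqrt_pos.mpr ha
  have hsb : (0:ℝ) < Real.sqrt (z x t - m) := Real.sqrt_pos.mpr hb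
  have hw : (0:ℝ) < Real.sqrt (z x t * (z x t - m)) :=
    Real.sqrt_pos.mpr (mul_pos ha hb)
  have hE : (0:ℝ) < Real.sqrt (z x t * (η ^ 2 + δ)) :=
    Real.sqrt_pos.mpr (mul_pos ha hηδ)
  have hwarg : z x t * (z x t - m) ≠ 0 := (mul_pos ha hb).ne'
  have hEarg : z x t * (η ^ 2 + δ) ≠ 0 := (mul_pos ha hηδ).ne'
  -- HasDerivAt facts
  have HX0 := hasDerivAt_Dx z hz x t
  have HT0 := hasDerivAt_Dt z hz x t
  have HXp := hasDerivAt_Dx (Dx z) (contDiff_Dx z hz) x t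
  have HXq := hasDerivAt_Dx (Dt z) (contDiff_Dt z hz) x t
  have HTp := hasDerivAt_Dt (Dx z) (contDiff_Dx z hz) x t
  have HTq := hasDerivAt_Dt (Dt z) (contDiff_Dt z hz) x t
  rw [← mixed_symm z hz x t] at HTp
  -- derivative of f12 in x
  have H12 := (((HXp.const_mul η).add
      ((HX0.const_mul (Real.sqrt (η ^ 2 + δ))).mul HXq)).div
    ((((HX0.mul (HX0.sub_const m)).sqrt hwarg).const_mul 2).mul HX0)
    (mul_pos (mul_pos two_pos hw) ha).ne')
  have e12 : Dx f12 x t = _ := H12.deriv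
  -- derivative of f11 in t
  have H11 := (((HT0.const_mul η).mul HTq).add
      (HTp.const_mul (Real.sqrt (η ^ 2 + δ)))).div
    (((HT0.mul (HT0.sub_const m)).sqrt hwarg).const_mul 2) (by positivity)
  have e11 : Dt f11 x t = _ := H11.deriv
  -- derivative of f22 in x
  have H22 := (hasDerivAt_const x η).div (HX0.sqrt ha.ne') hsa.ne'
  have e22 : Dx f22 x t = _ := H22.deriv
  -- derivative of f21 in t
  have H21 := (HT0.mul_const (η ^ 2 + δ)).sqrt hEarg
  have e21 : Dt f21 x t = _ := H21.deriv
  -- derivative of f31 in t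
  have H31 := (HT0.sub_const m).sqrt hb.ne'
  have e31 : Dt f31 x t = _ := H31.deriv
  have e32 : Dx f32 x t = 0 := deriv_const x 0
  have hδ2 : δ ^ 2 = 1 := by rcases hδ with rfl | rfl <;> norm_num
  refine ⟨?_, ?_, ?_⟩
  · rw [e12, e11]
    simp only [Pi.mul_apply, Pi.add_apply, Pi.sub_apply]
    simp only [f31, f22, f32, f21]
    rw [hPDE x t]
    simp only [Real.sqrt_mul ha.le]
    set sa := Real.sqrt (z x t) with hsadef
    set sb := Real.sqrt (z x t - m) with hsbdef
    set K := Real.sqrt (η ^ 2 + δ) with hKdef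
    have h1 : z x t = sa ^ 2 := (Real.sq_sqrt ha.le).symm
    have h2 : z x t - m = sb ^ 2 := (Real.sq_sqrt hb.le).symm
    have h4 : m = sa ^ 2 - sb ^ 2 := by rw [← h1, ← h2]; ring
    rw [h2, h1, h4]
    field_simp
    ring
  · rw [e22, e21]
    simp only [f11, f12, f31, f32]
    simp only [Real.sqrt_mul ha.le]
    set sa := Real.sqrt (z x t) with hsadef
    set sb := Real.sqrt (z x t - m) with hsbdef
    set K := Real.sqrt (η ^ 2 + δ) with hKdef
    have h1 : z x t = sa ^ 2 := (Real.sq_sqrt ha.le).symm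
    have h2 : z x t - m = sb ^ 2 := (Real.sq_sqrt hb.le).symm
    have h3 : η ^ 2 + δ = K ^ 2 := (Real.sq_sqrt hηδ.le).symm
    have h4 : m = sa ^ 2 - sb ^ 2 := by rw [← h1, ← h2]; ring
    simp only [h3, h1, h4]
    field_simp
    ring
  · rw [e32, e31]
    simp only [f11, f12, f21, f22]
    simp only [Real.sqrt_mul ha.le]
    set sa := Real.sqrt (z x t) with hsadef
    set sb := Real.sqrt (z x t - m) with hsbdef
    set K := Real.sqrt (η ^ 2 + δ) with hKdef
    have h1 : z x t = sa ^ 2 := (Real.sq_sqrt ha.le).symm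
    have h2 : z x t - m = sb ^ 2 := (Real.sq_sqrt hb.le).symm
    have h3 : η ^ 2 + δ = K ^ 2 := (Real.sq_sqrt hηδ.le).symm
    have h4 : m = sa ^ 2 - sb ^ 2 := by rw [← h1, ← h2]; ring
    simp only [h3, h1, h4]
    field_simp
    linear_combination (-Dt z x t * sa ^ 2 * δ) * h3 +
      (Dt z x t * sa ^ 2) * hδ2
end

section
/- Let m ≠ 0, δ = ±1, and let z : ℝ² → ℝ be a smooth positive function satisfying z_{tt} = z⁴ z_{xx} + 2 z³ z_x² + 2 z_t²/z − δ m² z. Define f11 = (δ/m)(z_t/z² + z_x), f12 = (δ/m)(z_t + z² z_x), f21 = 0, f22 = m, f31 = 1/z, f32 = z. Then the structure-equation identities hold: D_x f12 − D_t f11 = f31 f22 − f32 f21, D_x f22 − D_t f21 = f11 f32 − f12 f31, D_x f32 − D_t f31 = δ (f11 f22 − f12 f21). -/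
lemma hasDerivAt_fst' (g : ℝ × ℝ → ℝ) (x t : ℝ) (hg : DifferentiableAt ℝ g (x, t)) :
    HasDerivAt (fun s => g (s, t)) (fderiv ℝ g (x, t) (1, 0)) x :=
  hg.hasFDerivAt.comp_hasDerivAt x ((hasDerivAt_id x).prodMk (hasDerivAt_const x t))

lemma hasDerivAt_snd' (g : ℝ × ℝ → ℝ) (x t : ℝ) (hg : DifferentiableAt ℝ g (x, t)) :
    HasDerivAt (fun s => g (x, s)) (fderiv ℝ g (x, t) (0, 1)) t :=
  hg.hasFDerivAt.comp_hasDerivAt t ((hasDerivAt_const t x).prodMk (hasDerivAt_id t))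

lemma fderiv_contDiff' (g : ℝ × ℝ → ℝ) (hg : ContDiff ℝ (⊤ : ℕ∞) g) :
    ContDiff ℝ (⊤ : ℕ∞) (fderiv ℝ g) := hg.fderiv_right (by simp)

lemma contDiff_fderiv_apply' (g : ℝ × ℝ → ℝ) (hg : ContDiff ℝ (⊤ : ℕ∞) g) (v : ℝ × ℝ) :
    ContDiff ℝ (⊤ : ℕ∞) (fun p => fderiv ℝ g p v) :=
  (ContinuousLinearMap.apply ℝ ℝ v).contDiff.comp (fderiv_contDiff' g hg)

lemma fderiv_fderiv_apply' (g : ℝ × ℝ → ℝ) (hg : ContDiff ℝ (⊤ : ℕ∞) g) (p v w : ℝ × ℝ) :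
    fderiv ℝ (fun q => fderiv ℝ g q v) p w = fderiv ℝ (fderiv ℝ g) p w v := by
  have h : HasFDerivAt (fun q => fderiv ℝ g q v)
      ((ContinuousLinearMap.apply ℝ ℝ v).comp (fderiv ℝ (fderiv ℝ g) p)) p :=
    (ContinuousLinearMap.apply ℝ ℝ v).hasFDerivAt.comp p
      (((fderiv_contDiff' g hg).differentiable (by simp) p).hasFDerivAt)
  rw [h.fderiv]; rfl

lemma clairaut' (g : ℝ × ℝ → ℝ) (hg : ContDiff ℝ (⊤ : ℕ∞) g) (p : ℝ × ℝ) (v w : ℝ × ℝ) :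
    fderiv ℝ (fderiv ℝ g) p v w = fderiv ℝ (fderiv ℝ g) p w v :=
  second_derivative_symmetric (fun q => (hg.differentiable (by simp) q).hasFDerivAt)
    (((fderiv_contDiff' g hg).differentiable (by simp) p).hasFDerivAt) v w

/-- The equation `z_{tt} = z⁴ z_{xx} + 2 z³ z_x² + 2 z_t²/z − δ m² z` describes
pss (δ=1) or ss (δ=−1). -/
theorem example_z4_describes_pss_ss (m δ : ℝ) (hm : m ≠ 0) (hδ : δ = 1 ∨ δ = -1)
    (z : ℝ → ℝ → ℝ) (hz : ContDiff ℝ (⊤ : ℕ∞) fun p : ℝ × ℝ => z p.1 p.2)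
    (hpos : ∀ x t, 0 < z x t)
    (hPDE : ∀ x t, Dt (Dt z) x t =
      (z x t) ^ 4 * Dx (Dx z) x t + 2 * (z x t) ^ 3 * (Dx z x t) ^ 2
        + 2 * (Dt z x t) ^ 2 / z x t - δ * m ^ 2 * z x t) :
    let f11 : ℝ → ℝ → ℝ := fun x t => (δ / m) * (Dt z x t / (z x t) ^ 2 + Dx z x t)
    let f12 : ℝ → ℝ → ℝ := fun x t => (δ / m) * (Dt z x t + (z x t) ^ 2 * Dx z x t)
    let f21 : ℝ → ℝ → ℝ := fun _ _ => 0
    let f22 : ℝ → ℝ → ℝ := fun _ _ => m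
    let f31 : ℝ → ℝ → ℝ := fun x t => 1 / z x t
    let f32 : ℝ → ℝ → ℝ := fun x t => z x t
    ∀ x t : ℝ,
      Dx f12 x t - Dt f11 x t = f31 x t * f22 x t - f32 x t * f21 x t ∧
      Dx f22 x t - Dt f21 x t = f11 x t * f32 x t - f12 x t * f31 x t ∧
      Dx f32 x t - Dt f31 x t = δ * (f11 x t * f22 x t - f12 x t * f21 x t) := by
  intro f11 f12 f21 f22 f31 f32 x t
  set F : ℝ × ℝ → ℝ := fun p : ℝ × ℝ => z p.1 p.2 with hF
  set G1 : ℝ × ℝ → ℝ := fun p => fderiv ℝ F p (1, 0) with hG1def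
  set G2 : ℝ × ℝ → ℝ := fun p => fderiv ℝ F p (0, 1) with hG2def
  have hG1 : ContDiff ℝ (⊤ : ℕ∞) G1 := contDiff_fderiv_apply' F hz (1, 0)
  have hG2 : ContDiff ℝ (⊤ : ℕ∞) G2 := contDiff_fderiv_apply' F hz (0, 1)
  have hne : z x t ≠ 0 := (hpos x t).ne'
  -- first partials
  have h1 : HasDerivAt (fun s => z s t) (G1 (x, t)) x :=
    hasDerivAt_fst' F x t (hz.differentiable (by simp) (x, t))
  have h2 : HasDerivAt (fun s => z x s) (G2 (x, t)) t :=
    hasDerivAt_snd' F x t (hz.differentiable (by simp) (x, t))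
  have hP : Dx z x t = G1 (x, t) := h1.deriv
  have hQ : Dt z x t = G2 (x, t) := h2.deriv
  have hPfun : ∀ a b : ℝ, Dx z a b = G1 (a, b) := fun a b =>
    (hasDerivAt_fst' F a b (hz.differentiable (by simp) (a, b))).deriv
  have hQfun : ∀ a b : ℝ, Dt z a b = G2 (a, b) := fun a b =>
    (hasDerivAt_snd' F a b (hz.differentiable (by simp) (a, b))).deriv
  -- second partials
  have h3 : HasDerivAt (fun s => Dx z s t) (fderiv ℝ G1 (x, t) (1, 0)) x := by
    rw [show (fun s => Dx z s t) = fun s => G1 (s, t) from funext fun s => hPfun s t]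
    exact hasDerivAt_fst' G1 x t (hG1.differentiable (by simp) (x, t))
  have h4 : HasDerivAt (fun s => Dx z x s) (fderiv ℝ G1 (x, t) (0, 1)) t := by
    rw [show (fun s => Dx z x s) = fun s => G1 (x, s) from funext fun s => hPfun x s]
    exact hasDerivAt_snd' G1 x t (hG1.differentiable (by simp) (x, t))
  have h5 : HasDerivAt (fun s => Dt z s t) (fderiv ℝ G2 (x, t) (1, 0)) x := by
    rw [show (fun s => Dt z s t) = fun s => G2 (s, t) from funext fun s => hQfun s t]
    exact hasDerivAt_fst' G2 x t (hG2.differentiable (by simp) (x, t))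
  have h6 : HasDerivAt (fun s => Dt z x s) (fderiv ℝ G2 (x, t) (0, 1)) t := by
    rw [show (fun s => Dt z x s) = fun s => G2 (x, s) from funext fun s => hQfun x s]
    exact hasDerivAt_snd' G2 x t (hG2.differentiable (by simp) (x, t))
  -- Clairaut
  have hBC : fderiv ℝ G1 (x, t) (0, 1) = fderiv ℝ G2 (x, t) (1, 0) := by
    rw [hG1def, hG2def, fderiv_fderiv_apply' F hz, fderiv_fderiv_apply' F hz]
    exact (clairaut' F hz (x, t) (1, 0) (0, 1)).symm
  -- PDE in terms of fderivs
  have hPDE' : fderiv ℝ G2 (x, t) (0, 1) =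
      (z x t) ^ 4 * fderiv ℝ G1 (x, t) (1, 0) + 2 * (z x t) ^ 3 * (G1 (x, t)) ^ 2
        + 2 * (G2 (x, t)) ^ 2 / z x t - δ * m ^ 2 * z x t := by
    have := hPDE x t
    rw [show Dt (Dt z) x t = fderiv ℝ G2 (x, t) (0, 1) from h6.deriv,
      show Dx (Dx z) x t = fderiv ℝ G1 (x, t) (1, 0) from h3.deriv, hP, hQ] at this
    exact this
  refine ⟨?_, ?_, ?_⟩
  · -- equation 1
    have e1 : Dx f12 x t = _ :=
      ((h5.add ((h1.pow 2).mul h3)).const_mul (δ / m)).deriv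
    have e2 : Dt f11 x t = _ :=
      (((h6.div (h2.pow 2) (pow_ne_zero 2 hne)).add h4).const_mul (δ / m)).deriv
    show Dx f12 x t - Dt f11 x t = 1 / z x t * m - z x t * 0
    rw [e1, e2]
    simp only [hP, hQ, Pi.pow_apply]
    rw [hPDE', hBC]
    rcases hδ with h | h <;> subst h <;> field_simp <;> ring
  · -- equation 2
    have e3 : Dx f22 x t = 0 := deriv_const x m
    have e4 : Dt f21 x t = 0 := deriv_const t 0
    show Dx f22 x t - Dt f21 x t =
      (δ / m) * (Dt z x t / (z x t) ^ 2 + Dx z x t) * z x t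
        - (δ / m) * (Dt z x t + (z x t) ^ 2 * Dx z x t) * (1 / z x t)
    rw [e3, e4]
    field_simp
    ring
  · -- equation 3
    have e5 : Dx f32 x t = G1 (x, t) := h1.deriv
    have e6 : Dt f31 x t = (0 * z x t - 1 * G2 (x, t)) / (z x t) ^ 2 :=
      ((hasDerivAt_const t (1 : ℝ)).div h2 hne).deriv
    show Dx f32 x t - Dt f31 x t =
      δ * ((δ / m) * (Dt z x t / (z x t) ^ 2 + Dx z x t) * m
        - (δ / m) * (Dt z x t + (z x t) ^ 2 * Dx z x t) * 0)
    rw [e5, e6]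
    simp only [hP, hQ]
    rcases hδ with h | h <;> subst h <;> field_simp <;> ring
end

section
/- Let m ≠ 0, δ = ±1, and let z : ℝ² → ℝ be a smooth positive function satisfying z_{tt} = z z_{xt} − z_x z_t + (2/z) z_t² − δ m² z. Define f11 = (δ/(m z²)) z_t, f12 = (δ/(m z)) z_t, f21 = 0, f22 = m, f31 = 1/z, f32 = 1. Then the structure-equation identities hold: D_x f12 − D_t f11 = f31 f22 − f32 f21, D_x f22 − D_t f21 = f11 f32 − f12 f31, D_x f32 − D_t f31 = δ (f11 f22 − f12 f21). -/
/-- The equation `z_{tt} = z z_{xt} − z_x z_t + (2/z) z_t² − δ m² z` describes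
pss (δ=1) or ss (δ=−1). -/
theorem example_zxt_describes_pss_ss (m δ : ℝ) (hm : m ≠ 0) (hδ : δ = 1 ∨ δ = -1)
    (z : ℝ → ℝ → ℝ) (hz : ContDiff ℝ (⊤ : ℕ∞) fun p : ℝ × ℝ => z p.1 p.2)
    (hpos : ∀ x t, 0 < z x t)
    (hPDE : ∀ x t, Dt (Dt z) x t =
      z x t * Dt (Dx z) x t - Dx z x t * Dt z x t
        + (2 / z x t) * (Dt z x t) ^ 2 - δ * m ^ 2 * z x t) :
    let f11 : ℝ → ℝ → ℝ := fun x t => (δ / (m * (z x t) ^ 2)) * Dt z x t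
    let f12 : ℝ → ℝ → ℝ := fun x t => (δ / (m * z x t)) * Dt z x t
    let f21 : ℝ → ℝ → ℝ := fun _ _ => 0
    let f22 : ℝ → ℝ → ℝ := fun _ _ => m
    let f31 : ℝ → ℝ → ℝ := fun x t => 1 / z x t
    let f32 : ℝ → ℝ → ℝ := fun _ _ => 1
    ∀ x t : ℝ,
      Dx f12 x t - Dt f11 x t = f31 x t * f22 x t - f32 x t * f21 x t ∧
      Dx f22 x t - Dt f21 x t = f11 x t * f32 x t - f12 x t * f31 x t ∧
      Dx f32 x t - Dt f31 x t = δ * (f11 x t * f22 x t - f12 x t * f21 x t) := by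
  intro f11 f12 f21 f22 f31 f32 x t
  have hδ2 : δ ^ 2 = 1 := by rcases hδ with h | h <;> rw [h] <;> norm_num
  set F : ℝ × ℝ → ℝ := fun p : ℝ × ℝ => z p.1 p.2 with hFdef
  have hFd : Differentiable ℝ F := hz.differentiable (by simp)
  have hGc : ContDiff ℝ (⊤ : ℕ∞) (fderiv ℝ F) := hz.fderiv_right (by simp)
  have hGd : Differentiable ℝ (fderiv ℝ F) := hGc.differentiable (by simp)
  have hdirx : ∀ a b : ℝ, HasDerivAt (fun s : ℝ => ((s, b) : ℝ × ℝ)) (1, 0) a := fun a b =>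
    HasDerivAt.prodMk (hasDerivAt_id a) (hasDerivAt_const a b)
  have hdirt : ∀ a b : ℝ, HasDerivAt (fun s : ℝ => ((a, s) : ℝ × ℝ)) (0, 1) b := fun a b =>
    HasDerivAt.prodMk (hasDerivAt_const b a) (hasDerivAt_id b)
  have hzx : ∀ a b : ℝ, HasDerivAt (fun s => z s b) (fderiv ℝ F (a, b) (1, 0)) a := fun a b =>
    by have h := (hFd (a, b)).hasFDerivAt.comp_hasDerivAt a (hdirx a b); exact h
  have hzt : ∀ a b : ℝ, HasDerivAt (fun s => z a s) (fderiv ℝ F (a, b) (0, 1)) b := fun a b =>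
    by have h := (hFd (a, b)).hasFDerivAt.comp_hasDerivAt b (hdirt a b); exact h
  have hDxz : ∀ a b : ℝ, Dx z a b = fderiv ℝ F (a, b) (1, 0) := fun a b => (hzx a b).deriv
  have hDtz : ∀ a b : ℝ, Dt z a b = fderiv ℝ F (a, b) (0, 1) := fun a b => (hzt a b).deriv
  -- second partials
  have hztx : ∀ a b : ℝ, HasDerivAt (fun s => fderiv ℝ F (s, b) (0, 1))
      (fderiv ℝ (fderiv ℝ F) (a, b) (1, 0) (0, 1)) a := by
    intro a b
    have h0 := (hGd (a, b)).hasFDerivAt.comp_hasDerivAt a (hdirx a b)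
    have h := HasDerivAt.clm_apply h0 (hasDerivAt_const a ((0, 1) : ℝ × ℝ))
    simpa using h
  have hztt : ∀ a b : ℝ, HasDerivAt (fun s => fderiv ℝ F (a, s) (0, 1))
      (fderiv ℝ (fderiv ℝ F) (a, b) (0, 1) (0, 1)) b := by
    intro a b
    have h0 := (hGd (a, b)).hasFDerivAt.comp_hasDerivAt b (hdirt a b)
    have h := HasDerivAt.clm_apply h0 (hasDerivAt_const b ((0, 1) : ℝ × ℝ))
    simpa using h
  have hzxt : ∀ a b : ℝ, HasDerivAt (fun s => fderiv ℝ F (a, s) (1, 0))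
      (fderiv ℝ (fderiv ℝ F) (a, b) (0, 1) (1, 0)) b := by
    intro a b
    have h0 := (hGd (a, b)).hasFDerivAt.comp_hasDerivAt b (hdirt a b)
    have h := HasDerivAt.clm_apply h0 (hasDerivAt_const b ((1, 0) : ℝ × ℝ))
    simpa using h
  have hsymm : ∀ a b : ℝ, fderiv ℝ (fderiv ℝ F) (a, b) (1, 0) (0, 1)
      = fderiv ℝ (fderiv ℝ F) (a, b) (0, 1) (1, 0) := fun a b =>
    second_derivative_symmetric (fun y => (hFd y).hasFDerivAt)
      ((hGd (a, b)).hasFDerivAt) _ _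
  set A := z x t with hA
  set Ax := fderiv ℝ F (x, t) (1, 0) with hAx
  set At := fderiv ℝ F (x, t) (0, 1) with hAt
  set Bxt := fderiv ℝ (fderiv ℝ F) (x, t) (1, 0) (0, 1) with hBxt
  set Btt := fderiv ℝ (fderiv ℝ F) (x, t) (0, 1) (0, 1) with hBtt
  have hApos : 0 < A := hpos x t
  have hAne : A ≠ 0 := ne_of_gt hApos
  -- rewrite PDE
  have hPDE' : Btt = A * Bxt - Ax * At + (2 / A) * At ^ 2 - δ * m ^ 2 * A := by
    have h := hPDE x t
    have hDtDt : Dt (Dt z) x t = Btt := by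
      have : (fun s => Dt z x s) = fun s => fderiv ℝ F (x, s) (0, 1) := by
        funext s; exact hDtz x s
      simp only [Dt] at h ⊢
      rw [show (fun s => deriv (fun s' => z x s') s) = fun s => fderiv ℝ F (x, s) (0, 1) by
        funext s; exact (hzt x s).deriv]
      exact (hztt x t).deriv
    have hDtDx : Dt (Dx z) x t = Bxt := by
      simp only [Dt]
      rw [show (fun s => Dx z x s) = fun s => fderiv ℝ F (x, s) (1, 0) by
        funext s; exact hDxz x s]
      rw [(hzxt x t).deriv]
      exact (hsymm x t).symm
    rw [hDtDt, hDtDx, hDxz, hDtz] at h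
    exact h
  -- compute Dx f12
  have hd1 : Dx f12 x t = δ / m * ((Bxt * A - At * Ax) / A ^ 2) := by
    simp only [Dx, f12]
    rw [show (fun s => δ / (m * z s t) * Dt z s t)
        = fun s => δ / (m * z s t) * fderiv ℝ F (s, t) (0, 1) by
      funext s; rw [hDtz]]
    have h1 : HasDerivAt (fun s => δ / (m * z s t))
        ((0 * (m * A) - δ * (0 * A + m * Ax)) / (m * A) ^ 2) x :=
      (hasDerivAt_const x δ).div ((hasDerivAt_const x m).mul (hzx x t))
        (mul_ne_zero hm hAne)
    have h2 : HasDerivAt (fun s => δ / (m * z s t) * fderiv ℝ F (s, t) (0, 1)) _ x :=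
      h1.mul (hztx x t)
    rw [h2.deriv, ← hA, ← hAt, ← hBxt]
    field_simp
    ring
  -- compute Dt f11
  have hd2 : Dt f11 x t = δ / m * ((Btt * A - 2 * At ^ 2) / A ^ 3) := by
    simp only [Dt]
    rw [show (fun s => f11 x s)
        = fun s => δ / (m * z x s ^ 2) * fderiv ℝ F (x, s) (0, 1) by
      funext s; simp only [f11]; rw [hDtz]]
    have h1 : HasDerivAt (fun s => δ / (m * z x s ^ 2))
        ((0 * (m * A ^ 2) - δ * (0 * A ^ 2 + m * (2 * A ^ 1 * At))) / (m * A ^ 2) ^ 2) t :=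
      (hasDerivAt_const t δ).div ((hasDerivAt_const t m).mul ((hzt x t).pow 2))
        (mul_ne_zero hm (pow_ne_zero 2 hAne))
    have h2 : HasDerivAt (fun s => δ / (m * z x s ^ 2) * fderiv ℝ F (x, s) (0, 1)) _ t :=
      h1.mul (hztt x t)
    rw [h2.deriv, ← hA, ← hAt, ← hBtt]
    field_simp
    ring
  have hd3 : Dt f31 x t = -(At / A ^ 2) := by
    simp only [Dt]
    rw [show (fun s => f31 x s) = fun s => 1 / z x s by funext s; simp only [f31]]
    have h1 : HasDerivAt (fun s => 1 / z x s) ((0 * A - 1 * At) / A ^ 2) t :=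
      (hasDerivAt_const t (1 : ℝ)).div (hzt x t) hAne
    rw [h1.deriv]
    field_simp
    ring
  refine ⟨?_, ?_, ?_⟩
  · rw [hd1, hd2]
    simp only [f31, f22, f32, f21]
    rw [← hA, hPDE']
    rcases hδ with rfl | rfl <;> field_simp <;> ring
  · simp only [Dx, Dt, f22, f21, f11, f12, f31, f32, deriv_const]
    rw [(hzt x t).deriv, ← hAt, ← hA]
    field_simp
    ring
  · rw [hd3]
    simp only [Dx, Dt, f32, f21, f11, f22, deriv_const]
    rw [(hzt x t).deriv, ← hAt, ← hA]
    rcases hδ with rfl | rfl <;> field_simp <;> ring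
end

section
/- Let m ≠ 0, λ ≠ 0, δ = ±1, p ∈ ℤ, and let z : ℝ² → ℝ be a smooth positive function with λ² z² − δ nonvanishing, satisfying z_{tt} = m² z_{xx} + m p z^{p−1} z_x − p z^{p−1} z_t. Fix η ≠ 0 and define f21 = η/√|λ²z²−δ|, f22 = m f21, f31 = λ z f21, f32 = λ m z f21, f11 = λ z_t + λ(m − 1/(λ²z²−δ)) z_x + λ z^p, f12 = λ(m − 1/(λ²z²−δ)) z_t + λ m² z_x + λ m z^p. Then the structure-equation identities hold: D_x f12 − D_t f11 = f31 f22 − f32 f21, D_x f22 − D_t f21 = f11 f32 − f12 f31, D_x f32 − D_t f31 = δ (f11 f22 − f12 f21). -/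
theorem hcongr_deriv {f : ℝ → ℝ} {a b x : ℝ} (h : HasDerivAt f a x) (hab : a = b) :
    HasDerivAt f b x := hab ▸ h

theorem sqrtabs_hasDerivAt {g : ℝ → ℝ} {g' x0 : ℝ} (hg : HasDerivAt g g' x0)
    (h : g x0 ≠ 0) :
    HasDerivAt (fun s => Real.sqrt |g s|) (g' * Real.sqrt |g x0| / (2 * g x0)) x0 := by
  have h1 : HasDerivAt (fun s => |g s|) ((SignType.sign (g x0) : ℝ) * g') x0 :=
    (hasDerivAt_abs h).comp x0 hg
  have h2 : |g x0| ≠ 0 := abs_ne_zero.2 h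
  have h3 := (Real.hasDerivAt_sqrt h2).comp x0 h1
  refine hcongr_deriv h3 ?_
  rcases h.lt_or_gt with hneg | hpos
  · rw [sign_neg hneg, abs_of_neg hneg]
    have hu2 : Real.sqrt (-g x0) ^ 2 = -g x0 := Real.sq_sqrt (by linarith)
    have hune : Real.sqrt (-g x0) ≠ 0 := (Real.sqrt_pos.2 (by linarith)).ne'
    field_simp
    simp only [SignType.coe_neg_one, SignType.coe_one]
    linear_combination (-g') * hu2
  · rw [sign_pos hpos, abs_of_pos hpos]
    have hu2 : Real.sqrt (g x0) ^ 2 = g x0 := Real.sq_sqrt hpos.le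
    have hune : Real.sqrt (g x0) ≠ 0 := (Real.sqrt_pos.2 hpos).ne'
    field_simp
    simp only [SignType.coe_neg_one, SignType.coe_one]
    linear_combination (-g') * hu2

theorem key21 {g : ℝ → ℝ} (lam δ η : ℝ) {g' x0 : ℝ} (hg : HasDerivAt g g' x0)
    (h : lam ^ 2 * g x0 ^ 2 - δ ≠ 0) :
    HasDerivAt (fun s => η / Real.sqrt |lam ^ 2 * g s ^ 2 - δ|)
      (-(η * lam ^ 2 * g x0 * g') /
        ((lam ^ 2 * g x0 ^ 2 - δ) * Real.sqrt |lam ^ 2 * g x0 ^ 2 - δ|)) x0 := by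
  have hW : HasDerivAt (fun s => lam ^ 2 * g s ^ 2 - δ)
      (lam ^ 2 * (2 * g x0 ^ (2 - 1) * g')) x0 := ((hg.pow 2).const_mul (lam ^ 2)).sub_const δ
  have h1 := sqrtabs_hasDerivAt hW h
  have hrne : Real.sqrt |lam ^ 2 * g x0 ^ 2 - δ| ≠ 0 := (Real.sqrt_pos.2 (abs_pos.2 h)).ne'
  have h2 := (hasDerivAt_const x0 η).div h1 hrne
  refine hcongr_deriv h2 ?_
  have hs2 : Real.sqrt |lam ^ 2 * g x0 ^ 2 - δ| * Real.sqrt |lam ^ 2 * g x0 ^ 2 - δ|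
      = |lam ^ 2 * g x0 ^ 2 - δ| := Real.mul_self_sqrt (abs_nonneg _)
  field_simp
  ring

theorem keyinv {g : ℝ → ℝ} (lam δ : ℝ) {g' x0 : ℝ} (hg : HasDerivAt g g' x0)
    (h : lam ^ 2 * g x0 ^ 2 - δ ≠ 0) :
    HasDerivAt (fun s => 1 / (lam ^ 2 * g s ^ 2 - δ))
      (-(2 * lam ^ 2 * g x0 * g') / (lam ^ 2 * g x0 ^ 2 - δ) ^ 2) x0 := by
  have hW : HasDerivAt (fun s => lam ^ 2 * g s ^ 2 - δ)
      (lam ^ 2 * (2 * g x0 ^ (2 - 1) * g')) x0 := ((hg.pow 2).const_mul (lam ^ 2)).sub_const δ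
  have h2 := (hasDerivAt_const x0 (1 : ℝ)).div hW h
  refine hcongr_deriv h2 ?_
  field_simp
  ring

theorem keypow {g : ℝ → ℝ} (p : ℤ) {g' x0 : ℝ} (hg : HasDerivAt g g' x0) (h : g x0 ≠ 0) :
    HasDerivAt (fun s => g s ^ p) ((p : ℝ) * g x0 ^ (p - 1) * g') x0 := by
  simpa [mul_assoc, Function.comp_def] using (hasDerivAt_zpow p (g x0) (Or.inl h)).comp x0 hg

theorem sliceX (z : ℝ → ℝ → ℝ) (hz : Differentiable ℝ fun q : ℝ × ℝ => z q.1 q.2) (a b : ℝ) :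
    HasDerivAt (fun s => z s b)
      (fderiv ℝ (fun q : ℝ × ℝ => z q.1 q.2) (a, b) (1, 0)) a := by
  have h1 : HasDerivAt (fun s : ℝ => ((s, b) : ℝ × ℝ)) (1, 0) a :=
    (hasDerivAt_id a).prodMk (hasDerivAt_const a b)
  exact (hz (a, b)).hasFDerivAt.comp_hasDerivAt a h1

theorem sliceT (z : ℝ → ℝ → ℝ) (hz : Differentiable ℝ fun q : ℝ × ℝ => z q.1 q.2) (a b : ℝ) :
    HasDerivAt (fun s => z a s)
      (fderiv ℝ (fun q : ℝ × ℝ => z q.1 q.2) (a, b) (0, 1)) b := by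
  have h1 : HasDerivAt (fun s : ℝ => ((a, s) : ℝ × ℝ)) (0, 1) b :=
    (hasDerivAt_const b a).prodMk (hasDerivAt_id b)
  exact (hz (a, b)).hasFDerivAt.comp_hasDerivAt b h1

theorem slice2X (z : ℝ → ℝ → ℝ)
    (hF : Differentiable ℝ (fderiv ℝ (fun q : ℝ × ℝ => z q.1 q.2))) (v : ℝ × ℝ) (a b : ℝ) :
    HasDerivAt (fun s => fderiv ℝ (fun q : ℝ × ℝ => z q.1 q.2) (s, b) v)
      (fderiv ℝ (fderiv ℝ (fun q : ℝ × ℝ => z q.1 q.2)) (a, b) (1, 0) v) a := by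
  have h1 : HasDerivAt (fun s : ℝ => ((s, b) : ℝ × ℝ)) (1, 0) a :=
    (hasDerivAt_id a).prodMk (hasDerivAt_const a b)
  have h2 : HasDerivAt (fun s : ℝ => fderiv ℝ (fun q : ℝ × ℝ => z q.1 q.2) (s, b))
      (fderiv ℝ (fderiv ℝ (fun q : ℝ × ℝ => z q.1 q.2)) (a, b) (1, 0)) a :=
    (hF (a, b)).hasFDerivAt.comp_hasDerivAt a h1
  simpa using h2.clm_apply (hasDerivAt_const a v)

theorem slice2T (z : ℝ → ℝ → ℝ)
    (hF : Differentiable ℝ (fderiv ℝ (fun q : ℝ × ℝ => z q.1 q.2))) (v : ℝ × ℝ) (a b : ℝ) :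
    HasDerivAt (fun s => fderiv ℝ (fun q : ℝ × ℝ => z q.1 q.2) (a, s) v)
      (fderiv ℝ (fderiv ℝ (fun q : ℝ × ℝ => z q.1 q.2)) (a, b) (0, 1) v) b := by
  have h1 : HasDerivAt (fun s : ℝ => ((a, s) : ℝ × ℝ)) (0, 1) b :=
    (hasDerivAt_const b a).prodMk (hasDerivAt_id b)
  have h2 : HasDerivAt (fun s : ℝ => fderiv ℝ (fun q : ℝ × ℝ => z q.1 q.2) (a, s))
      (fderiv ℝ (fderiv ℝ (fun q : ℝ × ℝ => z q.1 q.2)) (a, b) (0, 1)) b :=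
    (hF (a, b)).hasFDerivAt.comp_hasDerivAt b h1
  simpa using h2.clm_apply (hasDerivAt_const b v)


set_option maxHeartbeats 1000000 in
/-- The equation `z_{tt} = m² z_{xx} + m p z^{p−1} z_x − p z^{p−1} z_t` describes
pss (δ=1) or ss (δ=−1). -/
theorem example_power_equation_describes_pss_ss (m lam δ η : ℝ) (p : ℤ)
    (hm : m ≠ 0) (hlam : lam ≠ 0) (hη : η ≠ 0) (hδ : δ = 1 ∨ δ = -1)
    (z : ℝ → ℝ → ℝ) (hz : ContDiff ℝ (⊤ : ℕ∞) fun p' : ℝ × ℝ => z p'.1 p'.2)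
    (hpos : ∀ x t, 0 < z x t)
    (hden : ∀ x t, lam ^ 2 * (z x t) ^ 2 - δ ≠ 0)
    (hPDE : ∀ x t, Dt (Dt z) x t =
      m ^ 2 * Dx (Dx z) x t + m * (p : ℝ) * z x t ^ (p - 1) * Dx z x t
        - (p : ℝ) * z x t ^ (p - 1) * Dt z x t) :
    let f21 : ℝ → ℝ → ℝ := fun x t => η / Real.sqrt |lam ^ 2 * (z x t) ^ 2 - δ|
    let f22 : ℝ → ℝ → ℝ := fun x t => m * f21 x t
    let f31 : ℝ → ℝ → ℝ := fun x t => lam * z x t * f21 x t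
    let f32 : ℝ → ℝ → ℝ := fun x t => lam * m * z x t * f21 x t
    let f11 : ℝ → ℝ → ℝ := fun x t =>
      lam * Dt z x t + lam * (m - 1 / (lam ^ 2 * (z x t) ^ 2 - δ)) * Dx z x t
        + lam * z x t ^ p
    let f12 : ℝ → ℝ → ℝ := fun x t =>
      lam * (m - 1 / (lam ^ 2 * (z x t) ^ 2 - δ)) * Dt z x t
        + lam * m ^ 2 * Dx z x t + lam * m * z x t ^ p
    ∀ x t : ℝ,
      Dx f12 x t - Dt f11 x t = f31 x t * f22 x t - f32 x t * f21 x t ∧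
      Dx f22 x t - Dt f21 x t = f11 x t * f32 x t - f12 x t * f31 x t ∧
      Dx f32 x t - Dt f31 x t = δ * (f11 x t * f22 x t - f12 x t * f21 x t) := by
  intro f21 f22 f31 f32 f11 f12 x t
  have hw : lam ^ 2 * z x t ^ 2 - δ ≠ 0 := hden x t
  have hane : z x t ≠ 0 := (hpos x t).ne'
  have hrne : Real.sqrt |lam ^ 2 * z x t ^ 2 - δ| ≠ 0 := (Real.sqrt_pos.2 (abs_pos.2 hw)).ne'
  have hZd : Differentiable ℝ fun q : ℝ × ℝ => z q.1 q.2 := hz.differentiable (by simp)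
  have hFd : Differentiable ℝ (fderiv ℝ fun q : ℝ × ℝ => z q.1 q.2) :=
    (hz.fderiv_right (m := 1) (WithTop.coe_le_coe.2 le_top)).differentiable one_ne_zero
  have h1x : HasDerivAt (fun s => z s t) (Dx z x t) x := by
    have h := sliceX z hZd x t; exact hcongr_deriv h h.deriv.symm
  have h1t : HasDerivAt (fun s => z x s) (Dt z x t) t := by
    have h := sliceT z hZd x t; exact hcongr_deriv h h.deriv.symm
  have h2xx : HasDerivAt (fun s => Dx z s t) (Dx (Dx z) x t) x := by
    have h := slice2X z hFd (1, 0) x t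
    rw [show (fun s => fderiv ℝ (fun q : ℝ × ℝ => z q.1 q.2) (s, t) ((1 : ℝ), (0 : ℝ)))
        = fun s => Dx z s t from funext fun s => (sliceX z hZd s t).deriv.symm] at h
    exact hcongr_deriv h h.deriv.symm
  have h2tx : HasDerivAt (fun s => Dt z s t) (Dx (Dt z) x t) x := by
    have h := slice2X z hFd (0, 1) x t
    rw [show (fun s => fderiv ℝ (fun q : ℝ × ℝ => z q.1 q.2) (s, t) ((0 : ℝ), (1 : ℝ)))
        = fun s => Dt z s t from funext fun s => (sliceT z hZd s t).deriv.symm] at h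
    exact hcongr_deriv h h.deriv.symm
  have h2xt : HasDerivAt (fun s => Dx z x s) (Dt (Dx z) x t) t := by
    have h := slice2T z hFd (1, 0) x t
    rw [show (fun s => fderiv ℝ (fun q : ℝ × ℝ => z q.1 q.2) (x, s) ((1 : ℝ), (0 : ℝ)))
        = fun s => Dx z x s from funext fun s => (sliceX z hZd x s).deriv.symm] at h
    exact hcongr_deriv h h.deriv.symm
  have h2tt : HasDerivAt (fun s => Dt z x s) (Dt (Dt z) x t) t := by
    have h := slice2T z hFd (0, 1) x t
    rw [show (fun s => fderiv ℝ (fun q : ℝ × ℝ => z q.1 q.2) (x, s) ((0 : ℝ), (1 : ℝ)))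
        = fun s => Dt z x s from funext fun s => (sliceT z hZd x s).deriv.symm] at h
    exact hcongr_deriv h h.deriv.symm
  have hmix : Dx (Dt z) x t = Dt (Dx z) x t := by
    have e1 : Dx (Dt z) x t
        = fderiv ℝ (fderiv ℝ fun q : ℝ × ℝ => z q.1 q.2) (x, t) (1, 0) (0, 1) := by
      have h := slice2X z hFd (0, 1) x t
      rw [show (fun s => fderiv ℝ (fun q : ℝ × ℝ => z q.1 q.2) (s, t) ((0 : ℝ), (1 : ℝ)))
          = fun s => Dt z s t from funext fun s => (sliceT z hZd s t).deriv.symm] at h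
      exact h.deriv
    have e2 : Dt (Dx z) x t
        = fderiv ℝ (fderiv ℝ fun q : ℝ × ℝ => z q.1 q.2) (x, t) (0, 1) (1, 0) := by
      have h := slice2T z hFd (1, 0) x t
      rw [show (fun s => fderiv ℝ (fun q : ℝ × ℝ => z q.1 q.2) (x, s) ((1 : ℝ), (0 : ℝ)))
          = fun s => Dx z x s from funext fun s => (sliceX z hZd x s).deriv.symm] at h
      exact h.deriv
    rw [e1, e2]
    exact second_derivative_symmetric (fun y => (hZd y).hasFDerivAt)
      ((hFd (x, t)).hasFDerivAt) _ _
  have hf21x : HasDerivAt (fun s => f21 s t)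
      (-(η * lam ^ 2 * z x t * Dx z x t) /
        ((lam ^ 2 * z x t ^ 2 - δ) * Real.sqrt |lam ^ 2 * z x t ^ 2 - δ|)) x :=
    key21 lam δ η h1x hw
  have hf21t : HasDerivAt (fun s => f21 x s)
      (-(η * lam ^ 2 * z x t * Dt z x t) /
        ((lam ^ 2 * z x t ^ 2 - δ) * Real.sqrt |lam ^ 2 * z x t ^ 2 - δ|)) t :=
    key21 lam δ η h1t hw
  have hf22x : HasDerivAt (fun s => f22 s t)
      (m * (-(η * lam ^ 2 * z x t * Dx z x t) /
        ((lam ^ 2 * z x t ^ 2 - δ) * Real.sqrt |lam ^ 2 * z x t ^ 2 - δ|))) x :=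
    hf21x.const_mul m
  have hf31t : HasDerivAt (fun s => f31 x s)
      (lam * η * Dt z x t / Real.sqrt |lam ^ 2 * z x t ^ 2 - δ|
        - lam ^ 3 * η * z x t ^ 2 * Dt z x t /
          ((lam ^ 2 * z x t ^ 2 - δ) * Real.sqrt |lam ^ 2 * z x t ^ 2 - δ|)) t :=
    hcongr_deriv ((h1t.const_mul lam).mul hf21t) (by beta_reduce; rw [show f21 x t = η / Real.sqrt |lam ^ 2 * z x t ^ 2 - δ| from rfl]; generalize hR : Real.sqrt |lam ^ 2 * z x t ^ 2 - δ| = R; have hR0 : R ≠ 0 := hR ▸ hrne; field_simp; ring)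
  have hf32x : HasDerivAt (fun s => f32 s t)
      (lam * m * η * Dx z x t / Real.sqrt |lam ^ 2 * z x t ^ 2 - δ|
        - lam ^ 3 * m * η * z x t ^ 2 * Dx z x t /
          ((lam ^ 2 * z x t ^ 2 - δ) * Real.sqrt |lam ^ 2 * z x t ^ 2 - δ|)) x :=
    hcongr_deriv ((h1x.const_mul (lam * m)).mul hf21x) (by beta_reduce; rw [show f21 x t = η / Real.sqrt |lam ^ 2 * z x t ^ 2 - δ| from rfl]; generalize hR : Real.sqrt |lam ^ 2 * z x t ^ 2 - δ| = R; have hR0 : R ≠ 0 := hR ▸ hrne; field_simp; ring)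
  have hf11t : HasDerivAt (fun s => f11 x s)
      (lam * Dt (Dt z) x t
        + 2 * lam ^ 3 * z x t * Dt z x t * Dx z x t / (lam ^ 2 * z x t ^ 2 - δ) ^ 2
        + lam * (m - 1 / (lam ^ 2 * z x t ^ 2 - δ)) * Dt (Dx z) x t
        + lam * (p : ℝ) * z x t ^ (p - 1) * Dt z x t) t :=
    hcongr_deriv (((h2tt.const_mul lam).add
        ((((keyinv lam δ h1t hw).const_sub m).const_mul lam).mul h2xt)).add
      ((keypow p h1t hane).const_mul lam)) (by field_simp; ring)
  have hf12x : HasDerivAt (fun s => f12 s t)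
      (2 * lam ^ 3 * z x t * Dx z x t * Dt z x t / (lam ^ 2 * z x t ^ 2 - δ) ^ 2
        + lam * (m - 1 / (lam ^ 2 * z x t ^ 2 - δ)) * Dx (Dt z) x t
        + lam * m ^ 2 * Dx (Dx z) x t
        + lam * m * (p : ℝ) * z x t ^ (p - 1) * Dx z x t) x :=
    hcongr_deriv ((((((keyinv lam δ h1x hw).const_sub m).const_mul lam).mul h2tx).add
        (h2xx.const_mul (lam * m ^ 2))).add
      ((keypow p h1x hane).const_mul (lam * m))) (by field_simp)
  refine ⟨?_, ?_, ?_⟩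
  · rw [show Dx f12 x t = _ from hf12x.deriv, show Dt f11 x t = _ from hf11t.deriv,
      show f31 x t = lam * z x t * (η / Real.sqrt |lam ^ 2 * z x t ^ 2 - δ|) from rfl,
      show f22 x t = m * (η / Real.sqrt |lam ^ 2 * z x t ^ 2 - δ|) from rfl,
      show f32 x t = lam * m * z x t * (η / Real.sqrt |lam ^ 2 * z x t ^ 2 - δ|) from rfl,
      show f21 x t = η / Real.sqrt |lam ^ 2 * z x t ^ 2 - δ| from rfl, hmix]
    linear_combination (-lam) * hPDE x t
  · rw [show Dx f22 x t = _ from hf22x.deriv, show Dt f21 x t = _ from hf21t.deriv,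
      show f11 x t = lam * Dt z x t
        + lam * (m - 1 / (lam ^ 2 * z x t ^ 2 - δ)) * Dx z x t + lam * z x t ^ p from rfl,
      show f12 x t = lam * (m - 1 / (lam ^ 2 * z x t ^ 2 - δ)) * Dt z x t
        + lam * m ^ 2 * Dx z x t + lam * m * z x t ^ p from rfl,
      show f31 x t = lam * z x t * (η / Real.sqrt |lam ^ 2 * z x t ^ 2 - δ|) from rfl,
      show f32 x t = lam * m * z x t * (η / Real.sqrt |lam ^ 2 * z x t ^ 2 - δ|) from rfl]
    generalize hR : Real.sqrt |lam ^ 2 * z x t ^ 2 - δ| = R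
    have hR0 : R ≠ 0 := hR ▸ hrne
    field_simp
    ring
  · rw [show Dx f32 x t = _ from hf32x.deriv, show Dt f31 x t = _ from hf31t.deriv,
      show f11 x t = lam * Dt z x t
        + lam * (m - 1 / (lam ^ 2 * z x t ^ 2 - δ)) * Dx z x t + lam * z x t ^ p from rfl,
      show f12 x t = lam * (m - 1 / (lam ^ 2 * z x t ^ 2 - δ)) * Dt z x t
        + lam * m ^ 2 * Dx z x t + lam * m * z x t ^ p from rfl,
      show f21 x t = η / Real.sqrt |lam ^ 2 * z x t ^ 2 - δ| from rfl,
      show f22 x t = m * (η / Real.sqrt |lam ^ 2 * z x t ^ 2 - δ|) from rfl]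
    generalize hR : Real.sqrt |lam ^ 2 * z x t ^ 2 - δ| = R
    have hR0 : R ≠ 0 := hR ▸ hrne
    field_simp
    ring
end

section
/- Let δ = ±1, let ψ21, ψ22, ψ31, ψ32 be differentiable real functions of one variable z with Δ₀ := ψ32 ψ21 − ψ31 ψ22 nowhere zero and H := ψ31² − δ ψ21² having nonvanishing derivative. Define, for a smooth function z(x,t), f21 = ψ21(z), f22 = ψ22(z), f31 = ψ31(z), f32 = ψ32(z), and (f11, f12)ᵀ = Δ₀⁻¹ M N (z_t, z_x)ᵀ where M = [[−ψ21, ψ31],[−ψ22, ψ32]] and N = [[ψ21', −ψ22'],[δ ψ31', −δ ψ32']], all evaluated at z. Suppose z satisfies z_{tt} = A z_{xx} + B z_{xt} + C with A = ((δψ22² − ψ32²)'/H'), B = 2(ψ31ψ32 − δψ21ψ22)'/H', and C = (2δΔ₀/H')(−f11,_z z_t + f12,_z z_x + Δ₀). Then the three structure-equation identities hold: D_x f12 − D_t f11 = f31 f22 − f32 f21, D_x f22 − D_t f21 = f11 f32 − f12 f31, D_x f32 − D_t f31 = δ (f11 f22 − f12 f21). -/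
section aux
variable (Z : ℝ × ℝ → ℝ)

lemma aux_left (hZ : Differentiable ℝ Z) (x t : ℝ) :
    HasDerivAt (fun s => Z (s, t)) (fderiv ℝ Z (x, t) (1, 0)) x :=
  (hZ (x,t)).hasFDerivAt.comp_hasDerivAt x ((hasDerivAt_id x).prodMk (hasDerivAt_const x t))

lemma aux_right (hZ : Differentiable ℝ Z) (x t : ℝ) :
    HasDerivAt (fun s => Z (x, s)) (fderiv ℝ Z (x, t) (0, 1)) t :=
  (hZ (x,t)).hasFDerivAt.comp_hasDerivAt t ((hasDerivAt_const t x).prodMk (hasDerivAt_id t))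

lemma aux_symm (hZ : ContDiff ℝ (⊤ : ℕ∞) Z) (p : ℝ × ℝ) (v w : ℝ × ℝ) :
    fderiv ℝ (fun q => fderiv ℝ Z q v) p w = fderiv ℝ (fun q => fderiv ℝ Z q w) p v := by
  have h1 : ContDiff ℝ (⊤ : ℕ∞) (fderiv ℝ Z) := hZ.fderiv_right (by simp)
  have hd : DifferentiableAt ℝ (fderiv ℝ Z) p := (h1.differentiable (by simp)).differentiableAt
  have key : ∀ u : ℝ × ℝ, fderiv ℝ (fun q => fderiv ℝ Z q u) p
      = ((fderiv ℝ (fderiv ℝ Z) p).flip u) := by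
    intro u
    have h2 := (hd.hasFDerivAt.clm_apply (hasFDerivAt_const u p)).fderiv
    simpa using h2
  have hsymm := second_derivative_symmetric (f := Z) (f' := fderiv ℝ Z)
    (f'' := fderiv ℝ (fderiv ℝ Z) p)
    (fun y => ((hZ.differentiable (by simp)) y).hasFDerivAt) hd.hasFDerivAt w v
  rw [key v, key w]
  simpa using hsymm

end aux

set_option maxHeartbeats 1000000000 in

set_option maxHeartbeats 1000000000 in
/-- Corollary 3.3 (sufficiency): with `f2j = ψ2j(z)`, `f3j = ψ3j(z)` and `f11, f12` given by
the matrix product `Δ₀⁻¹ M N (z_t, z_x)ᵀ`, every solution of the corresponding equation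
`z_{tt} = A z_{xx} + B z_{xt} + C` satisfies the structure equations. -/
theorem corollary_Delta0_describes_pss_ss (δ : ℝ) (hδ : δ = 1 ∨ δ = -1)
    (ψ21 ψ22 ψ31 ψ32 : ℝ → ℝ)
    (h21 : ContDiff ℝ (⊤ : ℕ∞) ψ21) (h22 : ContDiff ℝ (⊤ : ℕ∞) ψ22)
    (h31 : ContDiff ℝ (⊤ : ℕ∞) ψ31) (h32 : ContDiff ℝ (⊤ : ℕ∞) ψ32)
    (hΔ0 : ∀ s : ℝ, ψ32 s * ψ21 s - ψ31 s * ψ22 s ≠ 0)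
    (hH : ∀ s : ℝ, deriv (fun u => ψ31 u ^ 2 - δ * ψ21 u ^ 2) s ≠ 0)
    (z : ℝ → ℝ → ℝ) (hz : ContDiff ℝ (⊤ : ℕ∞) fun p : ℝ × ℝ => z p.1 p.2) :
    let Δ0 : ℝ → ℝ := fun s => ψ32 s * ψ21 s - ψ31 s * ψ22 s
    let H' : ℝ → ℝ := fun s => deriv (fun u => ψ31 u ^ 2 - δ * ψ21 u ^ 2) s
    -- (f11, f12)ᵀ = Δ₀⁻¹ · [[−ψ21, ψ31],[−ψ22, ψ32]] · [[ψ21', −ψ22'],[δψ31', −δψ32']] · (z_t, z_x)ᵀ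
    let F11 : ℝ → ℝ → ℝ → ℝ := fun s zt zx =>
      (1 / Δ0 s) * ((-(ψ21 s) * deriv ψ21 s + ψ31 s * (δ * deriv ψ31 s)) * zt
        + (ψ21 s * deriv ψ22 s - ψ31 s * (δ * deriv ψ32 s)) * zx)
    let F12 : ℝ → ℝ → ℝ → ℝ := fun s zt zx =>
      (1 / Δ0 s) * ((-(ψ22 s) * deriv ψ21 s + ψ32 s * (δ * deriv ψ31 s)) * zt
        + (ψ22 s * deriv ψ22 s - ψ32 s * (δ * deriv ψ32 s)) * zx)
    let A : ℝ → ℝ := fun s => deriv (fun u => δ * ψ22 u ^ 2 - ψ32 u ^ 2) s / H' s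
    let B : ℝ → ℝ := fun s =>
      2 * deriv (fun u => ψ31 u * ψ32 u - δ * ψ21 u * ψ22 u) s / H' s
    let C : ℝ → ℝ → ℝ → ℝ := fun s zt zx =>
      (2 * δ * Δ0 s / H' s) *
        (-(deriv (fun u => F11 u zt zx) s) * zt + deriv (fun u => F12 u zt zx) s * zx + Δ0 s)
    let g11 : ℝ → ℝ → ℝ := fun x t => F11 (z x t) (Dt z x t) (Dx z x t)
    let g12 : ℝ → ℝ → ℝ := fun x t => F12 (z x t) (Dt z x t) (Dx z x t)
    let g21 : ℝ → ℝ → ℝ := fun x t => ψ21 (z x t)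
    let g22 : ℝ → ℝ → ℝ := fun x t => ψ22 (z x t)
    let g31 : ℝ → ℝ → ℝ := fun x t => ψ31 (z x t)
    let g32 : ℝ → ℝ → ℝ := fun x t => ψ32 (z x t)
    (∀ x t : ℝ, Dt (Dt z) x t =
        A (z x t) * Dx (Dx z) x t + B (z x t) * Dt (Dx z) x t
          + C (z x t) (Dt z x t) (Dx z x t)) →
    ∀ x t : ℝ,
      Dx g12 x t - Dt g11 x t = g31 x t * g22 x t - g32 x t * g21 x t ∧
      Dx g22 x t - Dt g21 x t = g11 x t * g32 x t - g12 x t * g31 x t ∧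
      Dx g32 x t - Dt g31 x t = δ * (g11 x t * g22 x t - g12 x t * g21 x t) := by

  intro Δ0 H' F11 F12 A B C g11 g12 g21 g22 g31 g32 heq x t
  -- basic smoothness
  set Z : ℝ × ℝ → ℝ := fun p => z p.1 p.2 with hZdef
  have hZc : ContDiff ℝ (⊤ : ℕ∞) Z := hz
  have hZd : Differentiable ℝ Z := hZc.differentiable (by simp)
  set Zx : ℝ × ℝ → ℝ := fun p => fderiv ℝ Z p (1, 0) with hZxdef
  set Zt : ℝ × ℝ → ℝ := fun p => fderiv ℝ Z p (0, 1) with hZtdef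
  have hZxc : ContDiff ℝ (⊤ : ℕ∞) Zx := (hZc.fderiv_right (by simp)).clm_apply contDiff_const
  have hZtc : ContDiff ℝ (⊤ : ℕ∞) Zt := (hZc.fderiv_right (by simp)).clm_apply contDiff_const
  have hZxd : Differentiable ℝ Zx := hZxc.differentiable (by simp)
  have hZtd : Differentiable ℝ Zt := hZtc.differentiable (by simp)
  -- first derivatives of z
  have hx_z : HasDerivAt (fun s => z s t) (Dx z x t) x :=
    (aux_left Z hZd x t).differentiableAt.hasDerivAt
  have ht_z : HasDerivAt (fun s => z x s) (Dt z x t) t :=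
    (aux_right Z hZd x t).differentiableAt.hasDerivAt
  -- identification of Dx z, Dt z with Zx, Zt
  have hfun_x : ∀ t' : ℝ, (fun s => Dx z s t') = fun s => Zx (s, t') := by
    intro t'; funext s; exact (aux_left Z hZd s t').deriv
  have hfun_t : ∀ x' : ℝ, (fun s => Dt z x' s) = fun s => Zt (x', s) := by
    intro x'; funext s; exact (aux_right Z hZd x' s).deriv
  have hfun_x' : ∀ t' : ℝ, (fun s => Dt z s t') = fun s => Zt (s, t') := by
    intro t'; funext s; exact (aux_right Z hZd s t').deriv
  have hfun_t' : ∀ x' : ℝ, (fun s => Dx z x' s) = fun s => Zx (x', s) := by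
    intro x'; funext s; exact (aux_left Z hZd x' s).deriv
  -- second derivatives
  have hx_zx : HasDerivAt (fun s => Dx z s t) (Dx (Dx z) x t) x := by
    show HasDerivAt (fun s => Dx z s t) (deriv (fun s => Dx z s t) x) x
    rw [hfun_x t]
    exact (aux_left Zx hZxd x t).differentiableAt.hasDerivAt
  have hx_zt : HasDerivAt (fun s => Dt z s t) (Dx (Dt z) x t) x := by
    show HasDerivAt (fun s => Dt z s t) (deriv (fun s => Dt z s t) x) x
    rw [hfun_x' t]
    exact (aux_left Zt hZtd x t).differentiableAt.hasDerivAt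
  have ht_zt : HasDerivAt (fun s => Dt z x s) (Dt (Dt z) x t) t := by
    show HasDerivAt (fun s => Dt z x s) (deriv (fun s => Dt z x s) t) t
    rw [hfun_t x]
    exact (aux_right Zt hZtd x t).differentiableAt.hasDerivAt
  have hsym : Dt (Dx z) x t = Dx (Dt z) x t := by
    show deriv (fun s => Dx z x s) t = deriv (fun s => Dt z s t) x
    rw [hfun_t' x, hfun_x' t, (aux_right Zx hZxd x t).deriv, (aux_left Zt hZtd x t).deriv]
    exact aux_symm Z hZc (x, t) (1, 0) (0, 1)
  have ht_zx : HasDerivAt (fun s => Dx z x s) (Dx (Dt z) x t) t := by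
    rw [← hsym]
    show HasDerivAt (fun s => Dx z x s) (deriv (fun s => Dx z x s) t) t
    rw [hfun_t' x]
    exact (aux_right Zx hZxd x t).differentiableAt.hasDerivAt

  -- derivatives of the psi's
  have hψd : ∀ (ψ : ℝ → ℝ), ContDiff ℝ (⊤ : ℕ∞) ψ → ∀ s : ℝ, HasDerivAt ψ (deriv ψ s) s :=
    fun ψ h s => ((h.differentiable (by simp)) s).hasDerivAt
  have hψd2 : ∀ (ψ : ℝ → ℝ), ContDiff ℝ (⊤ : ℕ∞) ψ → ∀ s : ℝ,
      HasDerivAt (deriv ψ) (deriv (deriv ψ) s) s := fun ψ h s =>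
    ((((contDiff_infty_iff_deriv.mp (h.of_le (by simp))).2).differentiable (by simp)) s).hasDerivAt
  have d21 := hψd ψ21 h21 (z x t)
  have d22 := hψd ψ22 h22 (z x t)
  have d31 := hψd ψ31 h31 (z x t)
  have d32 := hψd ψ32 h32 (z x t)
  have d21' := hψd2 ψ21 h21 (z x t)
  have d22' := hψd2 ψ22 h22 (z x t)
  have d31' := hψd2 ψ31 h31 (z x t)
  have d32' := hψd2 ψ32 h32 (z x t)
  -- explicit derivatives of the combinations appearing in A, B, H'
  have hp21 : HasDerivAt (fun u => ψ21 u ^ 2) (2 * ψ21 (z x t) * deriv ψ21 (z x t)) (z x t) := by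
    simpa using d21.fun_pow 2
  have hp22 : HasDerivAt (fun u => ψ22 u ^ 2) (2 * ψ22 (z x t) * deriv ψ22 (z x t)) (z x t) := by
    simpa using d22.fun_pow 2
  have hp31 : HasDerivAt (fun u => ψ31 u ^ 2) (2 * ψ31 (z x t) * deriv ψ31 (z x t)) (z x t) := by
    simpa using d31.fun_pow 2
  have hp32 : HasDerivAt (fun u => ψ32 u ^ 2) (2 * ψ32 (z x t) * deriv ψ32 (z x t)) (z x t) := by
    simpa using d32.fun_pow 2
  have ederiv1 : deriv (fun u => ψ31 u ^ 2 - δ * ψ21 u ^ 2) (z x t)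
      = 2 * ψ31 (z x t) * deriv ψ31 (z x t) - δ * (2 * ψ21 (z x t) * deriv ψ21 (z x t)) :=
    (hp31.sub (hp21.const_mul δ)).deriv
  have ederiv2 : deriv (fun u => δ * ψ22 u ^ 2 - ψ32 u ^ 2) (z x t)
      = δ * (2 * ψ22 (z x t) * deriv ψ22 (z x t)) - 2 * ψ32 (z x t) * deriv ψ32 (z x t) :=
    ((hp22.const_mul δ).sub hp32).deriv
  have ederiv3 : deriv (fun u => ψ31 u * ψ32 u - δ * ψ21 u * ψ22 u) (z x t)
      = (deriv ψ31 (z x t) * ψ32 (z x t) + ψ31 (z x t) * deriv ψ32 (z x t))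
        - (δ * deriv ψ21 (z x t) * ψ22 (z x t) + δ * ψ21 (z x t) * deriv ψ22 (z x t)) := by
    have h := ((d31.mul d32).sub ((d21.const_mul δ).mul d22)).deriv
    exact h
  have hH' := hH (z x t)
  rw [ederiv1] at hH'
  have hD := hΔ0 (z x t)
  -- derivatives of F11, F12 in the z-slot (for the C-term)
  have hinvu := (hasDerivAt_const (z x t) (1:ℝ)).div ((d32.mul d21).sub (d31.mul d22)) hD
  have ederivF11 : deriv (fun u => 1 / (ψ32 u * ψ21 u - ψ31 u * ψ22 u) *
      ((-(ψ21 u) * deriv ψ21 u + ψ31 u * (δ * deriv ψ31 u)) * Dt z x t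
        + (ψ21 u * deriv ψ22 u - ψ31 u * (δ * deriv ψ32 u)) * Dx z x t)) (z x t) = _ :=
    (hinvu.mul ((((d21.neg.mul d21').add (d31.mul (d31'.const_mul δ))).mul_const (Dt z x t)).add
      (((d21.mul d22').sub (d31.mul (d32'.const_mul δ))).mul_const (Dx z x t)))).deriv
  have ederivF12 : deriv (fun u => 1 / (ψ32 u * ψ21 u - ψ31 u * ψ22 u) *
      ((-(ψ22 u) * deriv ψ21 u + ψ32 u * (δ * deriv ψ31 u)) * Dt z x t
        + (ψ22 u * deriv ψ22 u - ψ32 u * (δ * deriv ψ32 u)) * Dx z x t)) (z x t) = _ :=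
    (hinvu.mul ((((d22.neg.mul d21').add (d32.mul (d31'.const_mul δ))).mul_const (Dt z x t)).add
      (((d22.mul d22').sub (d32.mul (d32'.const_mul δ))).mul_const (Dx z x t)))).deriv
  -- compositions with z, in the x-direction
  have c21x : HasDerivAt (fun s => ψ21 (z s t)) (deriv ψ21 (z x t) * Dx z x t) x :=
    d21.comp x hx_z
  have c22x : HasDerivAt (fun s => ψ22 (z s t)) (deriv ψ22 (z x t) * Dx z x t) x :=
    d22.comp x hx_z
  have c31x : HasDerivAt (fun s => ψ31 (z s t)) (deriv ψ31 (z x t) * Dx z x t) x :=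
    d31.comp x hx_z
  have c32x : HasDerivAt (fun s => ψ32 (z s t)) (deriv ψ32 (z x t) * Dx z x t) x :=
    d32.comp x hx_z
  have c21x' : HasDerivAt (fun s => deriv ψ21 (z s t)) (deriv (deriv ψ21) (z x t) * Dx z x t) x :=
    d21'.comp (h₂ := deriv ψ21) x hx_z
  have c22x' : HasDerivAt (fun s => deriv ψ22 (z s t)) (deriv (deriv ψ22) (z x t) * Dx z x t) x :=
    d22'.comp (h₂ := deriv ψ22) x hx_z
  have c31x' : HasDerivAt (fun s => deriv ψ31 (z s t)) (deriv (deriv ψ31) (z x t) * Dx z x t) x :=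
    d31'.comp (h₂ := deriv ψ31) x hx_z
  have c32x' : HasDerivAt (fun s => deriv ψ32 (z s t)) (deriv (deriv ψ32) (z x t) * Dx z x t) x :=
    d32'.comp (h₂ := deriv ψ32) x hx_z
  -- compositions with z, in the t-direction
  have c21t : HasDerivAt (fun s => ψ21 (z x s)) (deriv ψ21 (z x t) * Dt z x t) t :=
    d21.comp t ht_z
  have c22t : HasDerivAt (fun s => ψ22 (z x s)) (deriv ψ22 (z x t) * Dt z x t) t :=
    d22.comp t ht_z
  have c31t : HasDerivAt (fun s => ψ31 (z x s)) (deriv ψ31 (z x t) * Dt z x t) t :=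
    d31.comp t ht_z
  have c32t : HasDerivAt (fun s => ψ32 (z x s)) (deriv ψ32 (z x t) * Dt z x t) t :=
    d32.comp t ht_z
  have c21t' : HasDerivAt (fun s => deriv ψ21 (z x s)) (deriv (deriv ψ21) (z x t) * Dt z x t) t :=
    d21'.comp t ht_z
  have c22t' : HasDerivAt (fun s => deriv ψ22 (z x s)) (deriv (deriv ψ22) (z x t) * Dt z x t) t :=
    d22'.comp t ht_z
  have c31t' : HasDerivAt (fun s => deriv ψ31 (z x s)) (deriv (deriv ψ31) (z x t) * Dt z x t) t :=
    d31'.comp t ht_z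
  have c32t' : HasDerivAt (fun s => deriv ψ32 (z x s)) (deriv (deriv ψ32) (z x t) * Dt z x t) t :=
    d32'.comp t ht_z
  -- full derivative of g12 in x
  have hinvx := (hasDerivAt_const x (1:ℝ)).div ((c32x.mul c21x).sub (c31x.mul c22x)) hD
  have hg12x := hinvx.mul
    ((((c22x.neg.mul c21x').add (c32x.mul (c31x'.const_mul δ))).mul hx_zt).add
      (((c22x.mul c22x').sub (c32x.mul (c32x'.const_mul δ))).mul hx_zx))
  have e1 : Dx g12 x t = _ := hg12x.deriv
  -- full derivative of g11 in t
  have hinvt := (hasDerivAt_const t (1:ℝ)).div ((c32t.mul c21t).sub (c31t.mul c22t)) hD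
  have hg11t := hinvt.mul
    ((((c21t.neg.mul c21t').add (c31t.mul (c31t'.const_mul δ))).mul ht_zt).add
      (((c21t.mul c22t').sub (c31t.mul (c32t'.const_mul δ))).mul ht_zx))
  have e2 : Dt g11 x t = _ := hg11t.deriv
  -- one-variable derivatives for equations 2 and 3
  have e3 : Dx g22 x t = deriv ψ22 (z x t) * Dx z x t := c22x.deriv
  have e4 : Dt g21 x t = deriv ψ21 (z x t) * Dt z x t := c21t.deriv
  have e5 : Dx g32 x t = deriv ψ32 (z x t) * Dx z x t := c32x.deriv
  have e6 : Dt g31 x t = deriv ψ31 (z x t) * Dt z x t := c31t.deriv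
  -- rewrite the PDE hypothesis
  have hq := heq x t
  simp only [A, B, C, F11, F12, Δ0, H'] at hq
  rw [hsym, ederivF11, ederivF12, ederiv1, ederiv2, ederiv3] at hq
  refine ⟨?_, ?_, ?_⟩
  · rw [e1, e2, hq]
    simp only [g21, g22, g31, g32]
    clear_value Δ0 H' F11 F12 A B C g11 g12 g21 g22 g31 g32
    clear heq e1 e2 e3 e4 e5 e6 hq ederivF11 ederivF12
    rcases hδ with rfl | rfl
    · have hH2 : 2 * ψ31 (z x t) * deriv ψ31 (z x t) - 2 * ψ21 (z x t) * deriv ψ21 (z x t) ≠ 0 :=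
        fun h => hH' (by linarith)
      simp only [Pi.mul_apply, Pi.sub_apply, Pi.div_apply, Pi.add_apply, Pi.neg_apply, one_mul, neg_mul, sub_neg_eq_add]
      have hH3 : ψ31 (z x t) * deriv ψ31 (z x t) - ψ21 (z x t) * deriv ψ21 (z x t) ≠ 0 :=
        fun h => hH2 (by linarith)
      field_simp [hD, hH2, hH3]
      set_option maxRecDepth 100000 in ring
    · have hH2 : 2 * ψ31 (z x t) * deriv ψ31 (z x t) + 2 * ψ21 (z x t) * deriv ψ21 (z x t) ≠ 0 :=
        fun h => hH' (by linarith)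
      simp only [Pi.mul_apply, Pi.sub_apply, Pi.div_apply, Pi.add_apply, Pi.neg_apply, one_mul, neg_mul, sub_neg_eq_add]
      have hH3 : ψ21 (z x t) * deriv ψ21 (z x t) + ψ31 (z x t) * deriv ψ31 (z x t) ≠ 0 :=
        fun h => hH2 (by linarith)
      have hH4 : ψ31 (z x t) * deriv ψ31 (z x t) + ψ21 (z x t) * deriv ψ21 (z x t) ≠ 0 :=
        fun h => hH2 (by linarith)
      field_simp [hD, hH2, hH3, hH4]
      set_option maxRecDepth 100000 in ring
  · rw [e3, e4]
    simp only [g11, g12, g31, g32, F11, F12, Δ0]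
    field_simp [hD]
    ring
  · rw [e5, e6]
    simp only [g11, g12, g21, g22, F11, F12, Δ0]
    clear_value Δ0 H' F11 F12 A B C g11 g12 g21 g22 g31 g32
    clear heq e1 e2 e3 e4 e5 e6 hq ederivF11 ederivF12
    rcases hδ with rfl | rfl <;> field_simp [hD, hH'] <;> ring
end

section
/- Let δ = ±1, m ∈ ℝ, η ≠ 0, let ρ be a differentiable non-constant real function with ρ² − δ nonvanishing, and let h(z, z_x, z_t) be differentiable with h_{,z_t} ≠ 0. Define f11 = h, f12 = m h − (ρ'/(ρ²−δ))(z_t − m z_x), f21 = η/√|ρ²−δ|, f22 = m f21, f31 = ρ f21, f32 = m ρ f21, all evaluated along a smooth function z(x,t). If z satisfies z_{tt} = A z_{xx} + B z_{xt} + C with A = (m/h_{,z_t})(h_{,z_x} + ρ'/(ρ²−δ)), B = m − (1/h_{,z_t})(h_{,z_x} + ρ'/(ρ²−δ)), C = ((m z_x − z_t)/h_{,z_t})(h_{,z} + z_x (ρ'/(ρ²−δ))'), then the three structure-equation identities D_x f12 − D_t f11 = f31 f22 − f32 f21, D_x f22 − D_t f21 = f11 f32 − f12 f31, D_x f32 −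 D_t f31 = δ (f11 f22 − f12 f21) hold. -/
/-- First partial derivative (in the first variable) of a function on the plane. -/
noncomputable def pd1 (F : ℝ × ℝ → ℝ) : ℝ × ℝ → ℝ := fun p => fderiv ℝ F p (1, 0)

/-- First partial derivative (in the second variable) of a function on the plane. -/
noncomputable def pd2 (F : ℝ × ℝ → ℝ) : ℝ × ℝ → ℝ := fun p => fderiv ℝ F p (0, 1)

lemma pd1_hasDerivAt (F : ℝ × ℝ → ℝ) (hF : Differentiable ℝ F) (x t : ℝ) :
    HasDerivAt (fun s => F (s, t)) (pd1 F (x, t)) x := by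
  have h1 : HasDerivAt (fun s : ℝ => ((s, t) : ℝ × ℝ)) (1, 0) x :=
    (hasDerivAt_id x).prodMk (hasDerivAt_const x t)
  exact (hF (x, t)).hasFDerivAt.comp_hasDerivAt x h1

lemma pd2_hasDerivAt (F : ℝ × ℝ → ℝ) (hF : Differentiable ℝ F) (x t : ℝ) :
    HasDerivAt (fun s => F (x, s)) (pd2 F (x, t)) t := by
  have h1 : HasDerivAt (fun s : ℝ => ((x, s) : ℝ × ℝ)) (0, 1) t :=
    (hasDerivAt_const t x).prodMk (hasDerivAt_id t)
  exact (hF (x, t)).hasFDerivAt.comp_hasDerivAt t h1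

lemma pd1_contDiff {F : ℝ × ℝ → ℝ} (hF : ContDiff ℝ (⊤ : ℕ∞) F) : ContDiff ℝ (⊤ : ℕ∞) (pd1 F) :=
  (hF.fderiv_right (by simp)).clm_apply contDiff_const

lemma pd2_contDiff {F : ℝ × ℝ → ℝ} (hF : ContDiff ℝ (⊤ : ℕ∞) F) : ContDiff ℝ (⊤ : ℕ∞) (pd2 F) :=
  (hF.fderiv_right (by simp)).clm_apply contDiff_const

lemma pd_symm (F : ℝ × ℝ → ℝ) (hF : ContDiff ℝ (⊤ : ℕ∞) F) (p : ℝ × ℝ) :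
    pd1 (pd2 F) p = pd2 (pd1 F) p := by
  have hdd : DifferentiableAt ℝ (fderiv ℝ F) p :=
    ((hF.fderiv_right (m := 1) (by rw [one_add_one_eq_two]; exact WithTop.coe_le_coe.mpr le_top)).differentiable one_ne_zero) p
  have hL2 : HasFDerivAt (fun q => fderiv ℝ F q ((0 : ℝ), (1 : ℝ)))
      ((ContinuousLinearMap.apply ℝ ℝ ((0 : ℝ), (1 : ℝ))).comp (fderiv ℝ (fderiv ℝ F) p)) p :=
    (ContinuousLinearMap.apply ℝ ℝ ((0 : ℝ), (1 : ℝ))).hasFDerivAt.comp p hdd.hasFDerivAt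
  have hL1 : HasFDerivAt (fun q => fderiv ℝ F q ((1 : ℝ), (0 : ℝ)))
      ((ContinuousLinearMap.apply ℝ ℝ ((1 : ℝ), (0 : ℝ))).comp (fderiv ℝ (fderiv ℝ F) p)) p :=
    (ContinuousLinearMap.apply ℝ ℝ ((1 : ℝ), (0 : ℝ))).hasFDerivAt.comp p hdd.hasFDerivAt
  have h1 : pd1 (pd2 F) p = fderiv ℝ (fderiv ℝ F) p (1, 0) (0, 1) := by
    show fderiv ℝ (fun q => fderiv ℝ F q ((0 : ℝ), (1 : ℝ))) p (1, 0) = _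
    rw [hL2.fderiv]; rfl
  have h2 : pd2 (pd1 F) p = fderiv ℝ (fderiv ℝ F) p (0, 1) (1, 0) := by
    show fderiv ℝ (fun q => fderiv ℝ F q ((1 : ℝ), (0 : ℝ))) p (0, 1) = _
    rw [hL1.fderiv]; rfl
  rw [h1, h2, (hF.contDiffAt.isSymmSndFDerivAt (by rw [minSmoothness_of_isRCLikeNormedField]; exact WithTop.coe_le_coe.mpr le_top)) (1, 0) (0, 1)]

lemma fderiv3_expand (L : ℝ × ℝ × ℝ →L[ℝ] ℝ) (u v w : ℝ) :
    L (u, v, w) = u * L (1, 0, 0) + v * L (0, 1, 0) + w * L (0, 0, 1) := by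
  have h : ((u, v, w) : ℝ × ℝ × ℝ) =
      u • ((1 : ℝ), (0 : ℝ), (0 : ℝ)) + v • ((0 : ℝ), (1 : ℝ), (0 : ℝ))
        + w • ((0 : ℝ), (0 : ℝ), (1 : ℝ)) := by
    simp [Prod.ext_iff]
  rw [h, map_add, map_add, map_smul, map_smul, map_smul, smul_eq_mul, smul_eq_mul, smul_eq_mul]

/-- Derivative of `η / √|ρ² - δ|`. -/
lemma hasDerivAt_g (δ η : ℝ) (ρ : ℝ → ℝ) (hρ : ContDiff ℝ (⊤ : ℕ∞) ρ)
    (hρδ : ∀ s : ℝ, ρ s ^ 2 - δ ≠ 0) (s : ℝ) :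
    HasDerivAt (fun u => η / Real.sqrt |ρ u ^ 2 - δ|)
      (-(ρ s * (deriv ρ s / (ρ s ^ 2 - δ)) * (η / Real.sqrt |ρ s ^ 2 - δ|))) s := by
  have hρd : Differentiable ℝ ρ := hρ.differentiable (by simp)
  have hWd : HasDerivAt (fun u => ρ u ^ 2 - δ) ((2 : ℕ) * ρ s ^ 1 * deriv ρ s) s :=
    ((hρd s).hasDerivAt.pow 2).sub_const δ
  have hWc : Continuous fun u => ρ u ^ 2 - δ := (hρ.continuous.pow 2).sub continuous_const
  rcases (hρδ s).lt_or_gt with hneg | hpos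
  · -- ρ s ^ 2 - δ < 0
    have hev : ∀ᶠ u in nhds s, ρ u ^ 2 - δ < 0 :=
      hWc.continuousAt.eventually_lt_const hneg
    have hcong : (fun u => η / Real.sqrt |ρ u ^ 2 - δ|)
        =ᶠ[nhds s] fun u => η / Real.sqrt (-(ρ u ^ 2 - δ)) :=
      hev.mono fun u hu => by
        show η / Real.sqrt |ρ u ^ 2 - δ| = η / Real.sqrt (-(ρ u ^ 2 - δ))
        rw [abs_of_neg hu]
    have hne : -(ρ s ^ 2 - δ) ≠ 0 := neg_ne_zero.mpr (hρδ s)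
    have hsq : HasDerivAt (fun u => Real.sqrt (-(ρ u ^ 2 - δ)))
        (-((2 : ℕ) * ρ s ^ 1 * deriv ρ s) / (2 * Real.sqrt (-(ρ s ^ 2 - δ)))) s :=
      hWd.neg.sqrt hne
    have hrpos : (0 : ℝ) < -(ρ s ^ 2 - δ) := neg_pos.mpr hneg
    have hrne : Real.sqrt (-(ρ s ^ 2 - δ)) ≠ 0 := Real.sqrt_ne_zero'.mpr hrpos
    have hdiv := (hasDerivAt_const s η).div hsq hrne
    have hfin := hdiv.congr_of_eventuallyEq hcong
    refine hfin.congr_deriv ?_; symm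
    rw [abs_of_neg hneg]
    set r := Real.sqrt (-(ρ s ^ 2 - δ)) with hrdef
    have hr2 : r ^ 2 = -(ρ s ^ 2 - δ) := Real.sq_sqrt hrpos.le
    have hw : ρ s ^ 2 - δ = -(r ^ 2) := by linarith
    rw [hw]
    have hrne' : r ≠ 0 := hrne
    field_simp
    ring
  · -- 0 < ρ s ^ 2 - δ
    have hev : ∀ᶠ u in nhds s, 0 < ρ u ^ 2 - δ :=
      hWc.continuousAt.eventually_const_lt hpos
    have hcong : (fun u => η / Real.sqrt |ρ u ^ 2 - δ|)
        =ᶠ[nhds s] fun u => η / Real.sqrt (ρ u ^ 2 - δ) :=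
      hev.mono fun u hu => by
        show η / Real.sqrt |ρ u ^ 2 - δ| = η / Real.sqrt (ρ u ^ 2 - δ)
        rw [abs_of_pos hu]
    have hsq : HasDerivAt (fun u => Real.sqrt (ρ u ^ 2 - δ))
        (((2 : ℕ) * ρ s ^ 1 * deriv ρ s) / (2 * Real.sqrt (ρ s ^ 2 - δ))) s :=
      hWd.sqrt (hρδ s)
    have hrne : Real.sqrt (ρ s ^ 2 - δ) ≠ 0 := Real.sqrt_ne_zero'.mpr hpos
    have hdiv := (hasDerivAt_const s η).div hsq hrne
    have hfin := hdiv.congr_of_eventuallyEq hcong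
    refine hfin.congr_deriv ?_; symm
    rw [abs_of_pos hpos]
    set r := Real.sqrt (ρ s ^ 2 - δ) with hrdef
    have hr2 : r ^ 2 = ρ s ^ 2 - δ := Real.sq_sqrt hpos.le
    have hw : ρ s ^ 2 - δ = r ^ 2 := hr2.symm
    rw [hw]
    have hrne' : r ≠ 0 := hrne
    field_simp
    ring

/-- Corollary 3.4 (sufficiency): the degenerate case Δ ≡ 0, ρ² − δ ≠ 0.
Here `h = h(z, z_x, z_t)` and primes denote derivatives in `z`. -/
theorem corollary_rho_describes_pss_ss (δ m η : ℝ) (hδ : δ = 1 ∨ δ = -1) (hη : η ≠ 0)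
    (ρ : ℝ → ℝ) (hρ : ContDiff ℝ (⊤ : ℕ∞) ρ)
    (hρnc : ∃ a b : ℝ, ρ a ≠ ρ b)
    (hρδ : ∀ s : ℝ, ρ s ^ 2 - δ ≠ 0)
    (h : ℝ → ℝ → ℝ → ℝ)
    (hh : ContDiff ℝ (⊤ : ℕ∞) fun p : ℝ × ℝ × ℝ => h p.1 p.2.1 p.2.2)
    (hhzt : ∀ a b c : ℝ, deriv (fun s => h a b s) c ≠ 0)
    (z : ℝ → ℝ → ℝ) (hz : ContDiff ℝ (⊤ : ℕ∞) fun p : ℝ × ℝ => z p.1 p.2) :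
    let hz' : ℝ → ℝ → ℝ → ℝ := fun a b c => deriv (fun s => h s b c) a
    let hzx : ℝ → ℝ → ℝ → ℝ := fun a b c => deriv (fun s => h a s c) b
    let hzt : ℝ → ℝ → ℝ → ℝ := fun a b c => deriv (fun s => h a b s) c
    let R : ℝ → ℝ := fun s => deriv ρ s / (ρ s ^ 2 - δ)
    let f11 : ℝ → ℝ → ℝ := fun x t => h (z x t) (Dx z x t) (Dt z x t)
    let f12 : ℝ → ℝ → ℝ := fun x t =>
      m * h (z x t) (Dx z x t) (Dt z x t) - R (z x t) * (Dt z x t - m * Dx z x t)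
    let f21 : ℝ → ℝ → ℝ := fun x t => η / Real.sqrt |ρ (z x t) ^ 2 - δ|
    let f22 : ℝ → ℝ → ℝ := fun x t => m * f21 x t
    let f31 : ℝ → ℝ → ℝ := fun x t => ρ (z x t) * f21 x t
    let f32 : ℝ → ℝ → ℝ := fun x t => m * ρ (z x t) * f21 x t
    (∀ x t : ℝ, Dt (Dt z) x t =
        (m / hzt (z x t) (Dx z x t) (Dt z x t)) *
            (hzx (z x t) (Dx z x t) (Dt z x t) + R (z x t)) * Dx (Dx z) x t
          + (m - (1 / hzt (z x t) (Dx z x t) (Dt z x t)) *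
              (hzx (z x t) (Dx z x t) (Dt z x t) + R (z x t))) * Dt (Dx z) x t
          + ((m * Dx z x t - Dt z x t) / hzt (z x t) (Dx z x t) (Dt z x t)) *
              (hz' (z x t) (Dx z x t) (Dt z x t) + Dx z x t * deriv R (z x t))) →
    ∀ x t : ℝ,
      Dx f12 x t - Dt f11 x t = f31 x t * f22 x t - f32 x t * f21 x t ∧
      Dx f22 x t - Dt f21 x t = f11 x t * f32 x t - f12 x t * f31 x t ∧
      Dx f32 x t - Dt f31 x t = δ * (f11 x t * f22 x t - f12 x t * f21 x t) := by
  intro hz'' hzx'' hzt'' R f11 f12 f21 f22 f31 f32 hpde x t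
  set Z2 : ℝ × ℝ → ℝ := fun p => z p.1 p.2 with hZ2def
  set H3 : ℝ × ℝ × ℝ → ℝ := fun p => h p.1 p.2.1 p.2.2 with hH3def
  have hZ2c : ContDiff ℝ (⊤ : ℕ∞) Z2 := hz
  have hH3c : ContDiff ℝ (⊤ : ℕ∞) H3 := hh
  have hZ2d : Differentiable ℝ Z2 := hZ2c.differentiable (by simp)
  have hH3d : Differentiable ℝ H3 := hH3c.differentiable (by simp)
  have hpd1d : Differentiable ℝ (pd1 Z2) := (pd1_contDiff hZ2c).differentiable (by simp)
  have hpd2d : Differentiable ℝ (pd2 Z2) := (pd2_contDiff hZ2c).differentiable (by simp)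
  -- first-order identifications
  have hDx : ∀ x' t' : ℝ, Dx z x' t' = pd1 Z2 (x', t') :=
    fun x' t' => (pd1_hasDerivAt Z2 hZ2d x' t').deriv
  have hDt : ∀ x' t' : ℝ, Dt z x' t' = pd2 Z2 (x', t') :=
    fun x' t' => (pd2_hasDerivAt Z2 hZ2d x' t').deriv
  -- basic HasDerivAt facts at (x, t)
  have hbx : HasDerivAt (fun s => z s t) (pd1 Z2 (x, t)) x := pd1_hasDerivAt Z2 hZ2d x t
  have hct : HasDerivAt (fun s => z x s) (pd2 Z2 (x, t)) t := pd2_hasDerivAt Z2 hZ2d x t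
  have hZXx : HasDerivAt (fun s => pd1 Z2 (s, t)) (pd1 (pd1 Z2) (x, t)) x :=
    pd1_hasDerivAt (pd1 Z2) hpd1d x t
  have hZXt : HasDerivAt (fun s => pd1 Z2 (x, s)) (pd2 (pd1 Z2) (x, t)) t :=
    pd2_hasDerivAt (pd1 Z2) hpd1d x t
  have hZTx : HasDerivAt (fun s => pd2 Z2 (s, t)) (pd1 (pd2 Z2) (x, t)) x :=
    pd1_hasDerivAt (pd2 Z2) hpd2d x t
  have hZTt : HasDerivAt (fun s => pd2 Z2 (x, s)) (pd2 (pd2 Z2) (x, t)) t :=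
    pd2_hasDerivAt (pd2 Z2) hpd2d x t
  -- second-order identifications
  have hPxx : Dx (Dx z) x t = pd1 (pd1 Z2) (x, t) := by
    show deriv (fun s => Dx z s t) x = _
    rw [show (fun s => Dx z s t) = (fun s => pd1 Z2 (s, t)) from funext fun s => hDx s t]
    exact hZXx.deriv
  have hPxt : Dt (Dx z) x t = pd2 (pd1 Z2) (x, t) := by
    show deriv (fun s => Dx z x s) t = _
    rw [show (fun s => Dx z x s) = (fun s => pd1 Z2 (x, s)) from funext fun s => hDx x s]
    exact hZXt.deriv
  have hPtt : Dt (Dt z) x t = pd2 (pd2 Z2) (x, t) := by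
    show deriv (fun s => Dt z x s) t = _
    rw [show (fun s => Dt z x s) = (fun s => pd2 Z2 (x, s)) from funext fun s => hDt x s]
    exact hZTt.deriv
  -- partial derivatives of h identified with fderiv of H3
  have hHz : deriv (fun s => h s (pd1 Z2 (x, t)) (pd2 Z2 (x, t))) (z x t)
      = fderiv ℝ H3 (z x t, pd1 Z2 (x, t), pd2 Z2 (x, t)) (1, 0, 0) := by
    have hpath : HasDerivAt (fun s : ℝ => ((s, pd1 Z2 (x, t), pd2 Z2 (x, t)) : ℝ × ℝ × ℝ))
        ((1 : ℝ), (0 : ℝ), (0 : ℝ)) (z x t) :=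
      (hasDerivAt_id _).prodMk ((hasDerivAt_const _ _).prodMk (hasDerivAt_const _ _))
    exact ((hH3d _).hasFDerivAt.comp_hasDerivAt _ hpath).deriv
  have hHb : deriv (fun s => h (z x t) s (pd2 Z2 (x, t))) (pd1 Z2 (x, t))
      = fderiv ℝ H3 (z x t, pd1 Z2 (x, t), pd2 Z2 (x, t)) (0, 1, 0) := by
    have hpath : HasDerivAt (fun s : ℝ => ((z x t, s, pd2 Z2 (x, t)) : ℝ × ℝ × ℝ))
        ((0 : ℝ), (1 : ℝ), (0 : ℝ)) (pd1 Z2 (x, t)) :=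
      (hasDerivAt_const _ _).prodMk ((hasDerivAt_id _).prodMk (hasDerivAt_const _ _))
    exact ((hH3d _).hasFDerivAt.comp_hasDerivAt _ hpath).deriv
  have hHc : deriv (fun s => h (z x t) (pd1 Z2 (x, t)) s) (pd2 Z2 (x, t))
      = fderiv ℝ H3 (z x t, pd1 Z2 (x, t), pd2 Z2 (x, t)) (0, 0, 1) := by
    have hpath : HasDerivAt (fun s : ℝ => ((z x t, pd1 Z2 (x, t), s) : ℝ × ℝ × ℝ))
        ((0 : ℝ), (0 : ℝ), (1 : ℝ)) (pd2 Z2 (x, t)) :=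
      (hasDerivAt_const _ _).prodMk ((hasDerivAt_const _ _).prodMk (hasDerivAt_id _))
    exact ((hH3d _).hasFDerivAt.comp_hasDerivAt _ hpath).deriv
  have hHCne : fderiv ℝ H3 (z x t, pd1 Z2 (x, t), pd2 Z2 (x, t)) ((0 : ℝ), (0 : ℝ), (1 : ℝ)) ≠ 0 := by
    rw [← hHc]; exact hhzt _ _ _
  -- differentiability of R
  have hderivρ : ContDiff ℝ 1 (deriv ρ) := (contDiff_succ_iff_deriv (n := 1)).mp (hρ.of_le (by rw [one_add_one_eq_two]; exact WithTop.coe_le_coe.mpr le_top)) |>.2.2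
  have hRdiff : DifferentiableAt ℝ R (z x t) := by
    show DifferentiableAt ℝ (fun s => deriv ρ s / (ρ s ^ 2 - δ)) (z x t)
    exact ((hderivρ.differentiable one_ne_zero) (z x t)).div
      ((((hρ.differentiable (by simp)) (z x t)).pow 2).sub_const δ) (hρδ _)
  have hRz : HasDerivAt (fun s => R (z s t)) (deriv R (z x t) * pd1 Z2 (x, t)) x :=
    by have := hRdiff.hasDerivAt.comp x hbx; exact this
  -- g and its derivative
  have hG := hasDerivAt_g δ η ρ hρ hρδ (z x t)
  -- chain rule for H3 in the x and t directions
  have hpathx : HasDerivAt (fun s => ((z s t, pd1 Z2 (s, t), pd2 Z2 (s, t)) : ℝ × ℝ × ℝ))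
      ((pd1 Z2 (x, t), pd1 (pd1 Z2) (x, t), pd1 (pd2 Z2) (x, t)) : ℝ × ℝ × ℝ) x :=
    hbx.prodMk (hZXx.prodMk hZTx)
  have hpatht : HasDerivAt (fun s => ((z x s, pd1 Z2 (x, s), pd2 Z2 (x, s)) : ℝ × ℝ × ℝ))
      ((pd2 Z2 (x, t), pd2 (pd1 Z2) (x, t), pd2 (pd2 Z2) (x, t)) : ℝ × ℝ × ℝ) t :=
    hct.prodMk (hZXt.prodMk hZTt)
  have hcx := (hH3d (z x t, pd1 Z2 (x, t), pd2 Z2 (x, t))).hasFDerivAt.comp_hasDerivAt x hpathx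
  have hcy := (hH3d (z x t, pd1 Z2 (x, t), pd2 Z2 (x, t))).hasFDerivAt.comp_hasDerivAt t hpatht
  rw [fderiv3_expand] at hcx hcy
  -- the three equations
  refine ⟨?_, ?_, ?_⟩
  · -- equation 1
    have hfun12 : (fun s => f12 s t) = fun s =>
        m * H3 (z s t, pd1 Z2 (s, t), pd2 Z2 (s, t))
          - R (z s t) * (pd2 Z2 (s, t) - m * pd1 Z2 (s, t)) := by
      funext s
      show m * h (z s t) (Dx z s t) (Dt z s t) - R (z s t) * (Dt z s t - m * Dx z s t) = _
      rw [hDx s t, hDt s t]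
    have hfun11 : (fun s => f11 x s) = fun s =>
        H3 (z x s, pd1 Z2 (x, s), pd2 Z2 (x, s)) := by
      funext s
      show h (z x s) (Dx z x s) (Dt z x s) = _
      rw [hDx x s, hDt x s]
    have e12 : deriv (fun s =>
        m * H3 (z s t, pd1 Z2 (s, t), pd2 Z2 (s, t))
          - R (z s t) * (pd2 Z2 (s, t) - m * pd1 Z2 (s, t))) x = _ :=
      ((hcx.const_mul m).sub (hRz.mul (hZTx.sub (hZXx.const_mul m)))).deriv
    have e11 : deriv (fun s => H3 (z x s, pd1 Z2 (x, s), pd2 Z2 (x, s))) t = _ := hcy.deriv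
    have hp := hpde x t
    simp only [show hzt'' = fun a b c => deriv (fun s => h a b s) c from rfl,
      show hzx'' = fun a b c => deriv (fun s => h a s c) b from rfl,
      show hz'' = fun a b c => deriv (fun s => h s b c) a from rfl] at hp
    rw [hPxx, hPxt, hPtt, hDx x t, hDt x t, hHz, hHb, hHc] at hp
    show deriv (fun s => f12 s t) x - deriv (fun s => f11 x s) t
      = f31 x t * f22 x t - f32 x t * f21 x t
    rw [hfun12, hfun11, e12, e11, pd_symm Z2 hZ2c (x, t), hp]
    simp only [show f31 = (fun x t => ρ (z x t) * f21 x t) from rfl,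
      show f32 = (fun x t => m * ρ (z x t) * f21 x t) from rfl,
      show f22 = (fun x t => m * f21 x t) from rfl,
      show f21 = (fun x t => η / Real.sqrt |ρ (z x t) ^ 2 - δ|) from rfl]
    simp only [Pi.sub_apply]
    field_simp
    ring
  · -- equation 2
    have hGx := hG.comp x hbx
    have hGt := hG.comp t hct
    have e22 : deriv (fun s => f22 s t) x = _ := (HasDerivAt.const_mul m hGx).deriv
    have e21 : deriv (fun s => f21 x s) t = _ := hGt.deriv
    show deriv (fun s => f22 s t) x - deriv (fun s => f21 x s) t
      = f11 x t * f32 x t - f12 x t * f31 x t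
    rw [e22, e21]
    simp only [show f11 = (fun x t => h (z x t) (Dx z x t) (Dt z x t)) from rfl,
      show f12 = (fun x t => m * h (z x t) (Dx z x t) (Dt z x t)
        - R (z x t) * (Dt z x t - m * Dx z x t)) from rfl,
      show f31 = (fun x t => ρ (z x t) * f21 x t) from rfl,
      show f32 = (fun x t => m * ρ (z x t) * f21 x t) from rfl,
      show f21 = (fun x t => η / Real.sqrt |ρ (z x t) ^ 2 - δ|) from rfl,
      show R = (fun s => deriv ρ s / (ρ s ^ 2 - δ)) from rfl]
    rw [hDx x t, hDt x t]
    ring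
  · -- equation 3
    have hGx := hG.comp x hbx
    have hGt := hG.comp t hct
    have hρx := ((hρ.differentiable (by simp)) (z x t)).hasDerivAt.comp x hbx
    have hρt := ((hρ.differentiable (by simp)) (z x t)).hasDerivAt.comp t hct
    have e32 : deriv (fun s => f32 s t) x = _ :=
      ((HasDerivAt.const_mul m hρx).mul
        hGx).deriv
    have e31 : deriv (fun s => f31 x s) t = _ :=
      (hρt.mul hGt).deriv
    simp only [Function.comp_def] at e32 e31
    show deriv (fun s => f32 s t) x - deriv (fun s => f31 x s) t
      = δ * (f11 x t * f22 x t - f12 x t * f21 x t)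
    rw [e32, e31]
    simp only [show f11 = (fun x t => h (z x t) (Dx z x t) (Dt z x t)) from rfl,
      show f12 = (fun x t => m * h (z x t) (Dx z x t) (Dt z x t)
        - R (z x t) * (Dt z x t - m * Dx z x t)) from rfl,
      show f22 = (fun x t => m * f21 x t) from rfl,
      show f21 = (fun x t => η / Real.sqrt |ρ (z x t) ^ 2 - δ|) from rfl,
      show R = (fun s => deriv ρ s / (ρ s ^ 2 - δ)) from rfl]
    rw [hDx x t, hDt x t]
    have hrne : Real.sqrt |ρ (z x t) ^ 2 - δ| ≠ 0 :=
      Real.sqrt_ne_zero'.mpr (abs_pos.mpr (hρδ _))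
    field_simp [hρδ (z x t)]
    ring
end

section
/- Let h(z, z_x, z_t), ψ(z) ≠ 0, χ(z) be differentiable with h_{,z_t} ≠ 0 and (ψ')² + (χ')² ≠ 0, and fix a sign ε = ±1. Define f11 = h, f12 = (1/ψ)(χ h + ε z_t ψ' − ε z_x χ'), f21 = ψ, f22 = χ, f31 = ε ψ, f32 = ε χ, evaluated along a smooth z(x,t). If z satisfies z_{tt} = A z_{xx} + B z_{xt} + C with A = (1/(ψ h_{,z_t}))(χ h_{,z_x} − ε χ'), B = χ/ψ − (1/h_{,z_t})(h_{,z_x} − ε ψ'/ψ), and C = (1/h_{,z_t}){−z_t h_{,z} + z_x[(χ/ψ)' h + (χ/ψ) h_{,z} + ε z_t (ψ'/ψ)' − ε z_x (χ'/ψ)']}, then the three pseudospherical (δ = 1) structure-equation identities hold: D_x f12 − D_t f11 = f31 f22 − f32 f21, D_x f22 − D_t f21 = f11 f32 − f12 f31, D_x f32 − D_t f31 = f11 f22 − f12 f21. -/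
section helpers

private lemma slice_x {F : ℝ × ℝ → ℝ} {L : ℝ × ℝ →L[ℝ] ℝ} {x t : ℝ}
    (hF : HasFDerivAt F L (x, t)) :
    HasDerivAt (fun s => F (s, t)) (L (1, 0)) x :=
  hF.comp_hasDerivAt x ((hasDerivAt_id x).prodMk (hasDerivAt_const x t))

private lemma slice_t {F : ℝ × ℝ → ℝ} {L : ℝ × ℝ →L[ℝ] ℝ} {x t : ℝ}
    (hF : HasFDerivAt F L (x, t)) :
    HasDerivAt (fun s => F (x, s)) (L (0, 1)) t :=
  hF.comp_hasDerivAt t ((hasDerivAt_const t x).prodMk (hasDerivAt_id t))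

private lemma slice3_1 {H : ℝ × ℝ × ℝ → ℝ} {L : ℝ × ℝ × ℝ →L[ℝ] ℝ} {a b c : ℝ}
    (hH : HasFDerivAt H L (a, b, c)) :
    HasDerivAt (fun s => H (s, b, c)) (L (1, 0, 0)) a :=
  hH.comp_hasDerivAt a ((hasDerivAt_id a).prodMk (hasDerivAt_const a (b, c)))

private lemma slice3_2 {H : ℝ × ℝ × ℝ → ℝ} {L : ℝ × ℝ × ℝ →L[ℝ] ℝ} {a b c : ℝ}
    (hH : HasFDerivAt H L (a, b, c)) :
    HasDerivAt (fun s => H (a, s, c)) (L (0, 1, 0)) b :=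
  hH.comp_hasDerivAt b ((hasDerivAt_const b a).prodMk
    ((hasDerivAt_id b).prodMk (hasDerivAt_const b c)))

private lemma slice3_3 {H : ℝ × ℝ × ℝ → ℝ} {L : ℝ × ℝ × ℝ →L[ℝ] ℝ} {a b c : ℝ}
    (hH : HasFDerivAt H L (a, b, c)) :
    HasDerivAt (fun s => H (a, b, s)) (L (0, 0, 1)) c :=
  hH.comp_hasDerivAt c ((hasDerivAt_const c a).prodMk
    ((hasDerivAt_const c b).prodMk (hasDerivAt_id c)))

private lemma comp3 {H : ℝ × ℝ × ℝ → ℝ} {L : ℝ × ℝ × ℝ →L[ℝ] ℝ}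
    {a b c : ℝ → ℝ} {a' b' c' s : ℝ}
    (hH : HasFDerivAt H L (a s, b s, c s))
    (ha : HasDerivAt a a' s) (hb : HasDerivAt b b' s) (hc : HasDerivAt c c' s) :
    HasDerivAt (fun u => H (a u, b u, c u))
      (a' * L (1, 0, 0) + b' * L (0, 1, 0) + c' * L (0, 0, 1)) s := by
  have h1 : HasDerivAt (fun u => (a u, b u, c u)) (a', b', c') s := ha.prodMk (hb.prodMk hc)
  have h2 := hH.comp_hasDerivAt s h1
  refine h2.congr_deriv ?_
  have e : (a', b', c') = a' • ((1:ℝ), (0:ℝ), (0:ℝ)) + b' • ((0:ℝ), (1:ℝ), (0:ℝ))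
      + c' • ((0:ℝ), (0:ℝ), (1:ℝ)) := by
    simp [Prod.ext_iff]
  rw [e, map_add, map_add, map_smul, map_smul, map_smul]
  simp [smul_eq_mul]

end helpers

set_option maxHeartbeats 1000000 in
/-- Corollary 3.5 (sufficiency): the degenerate case Δ ≡ 0 with ρ = ε = ±1 (δ = 1).
Primes denote derivatives with respect to `z`. -/
theorem corollary_psi_chi_describes_pss (ε : ℝ) (hε : ε = 1 ∨ ε = -1)
    (ψ χ : ℝ → ℝ) (hψ : ContDiff ℝ (⊤ : ℕ∞) ψ) (hχ : ContDiff ℝ (⊤ : ℕ∞) χ)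
    (hψne : ∀ s : ℝ, ψ s ≠ 0)
    (hnd : ∀ s : ℝ, (deriv ψ s) ^ 2 + (deriv χ s) ^ 2 ≠ 0)
    (h : ℝ → ℝ → ℝ → ℝ)
    (hh : ContDiff ℝ (⊤ : ℕ∞) fun p : ℝ × ℝ × ℝ => h p.1 p.2.1 p.2.2)
    (hhzt : ∀ a b c : ℝ, deriv (fun s => h a b s) c ≠ 0)
    (z : ℝ → ℝ → ℝ) (hz : ContDiff ℝ (⊤ : ℕ∞) fun p : ℝ × ℝ => z p.1 p.2) :
    let hz' : ℝ → ℝ → ℝ → ℝ := fun a b c => deriv (fun s => h s b c) a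
    let hzx : ℝ → ℝ → ℝ → ℝ := fun a b c => deriv (fun s => h a s c) b
    let hzt : ℝ → ℝ → ℝ → ℝ := fun a b c => deriv (fun s => h a b s) c
    let A : ℝ → ℝ → ℝ → ℝ := fun a b c =>
      (1 / (ψ a * hzt a b c)) * (χ a * hzx a b c - ε * deriv χ a)
    let B : ℝ → ℝ → ℝ → ℝ := fun a b c =>
      χ a / ψ a - (1 / hzt a b c) * (hzx a b c - ε * deriv ψ a / ψ a)
    let C : ℝ → ℝ → ℝ → ℝ := fun a b c =>
      (1 / hzt a b c) * (-c * hz' a b c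
        + b * (deriv (fun u => χ u / ψ u) a * h a b c + (χ a / ψ a) * hz' a b c
          + ε * c * deriv (fun u => deriv ψ u / ψ u) a
          - ε * b * deriv (fun u => deriv χ u / ψ u) a))
    let f11 : ℝ → ℝ → ℝ := fun x t => h (z x t) (Dx z x t) (Dt z x t)
    let f12 : ℝ → ℝ → ℝ := fun x t =>
      (1 / ψ (z x t)) * (χ (z x t) * h (z x t) (Dx z x t) (Dt z x t)
        + ε * Dt z x t * deriv ψ (z x t) - ε * Dx z x t * deriv χ (z x t))
    let f21 : ℝ → ℝ → ℝ := fun x t => ψ (z x t)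
    let f22 : ℝ → ℝ → ℝ := fun x t => χ (z x t)
    let f31 : ℝ → ℝ → ℝ := fun x t => ε * ψ (z x t)
    let f32 : ℝ → ℝ → ℝ := fun x t => ε * χ (z x t)
    (∀ x t : ℝ, Dt (Dt z) x t =
        A (z x t) (Dx z x t) (Dt z x t) * Dx (Dx z) x t
          + B (z x t) (Dx z x t) (Dt z x t) * Dt (Dx z) x t
          + C (z x t) (Dx z x t) (Dt z x t)) →
    ∀ x t : ℝ,
      Dx f12 x t - Dt f11 x t = f31 x t * f22 x t - f32 x t * f21 x t ∧
      Dx f22 x t - Dt f21 x t = f11 x t * f32 x t - f12 x t * f31 x t ∧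
      Dx f32 x t - Dt f31 x t = f11 x t * f22 x t - f12 x t * f21 x t := by
  have h1top : (1 : WithTop ℕ∞) ≤ ((⊤:ℕ∞) : WithTop ℕ∞) := by exact_mod_cast le_top
  intro hz' hzx hzt A B C f11 f12 f21 f22 f31 f32 pde x t
  have hε2 : ε * ε = 1 := by rcases hε with h1 | h1 <;> simp [h1]
  -- basic differentiability
  set F : ℝ × ℝ → ℝ := fun p : ℝ × ℝ => z p.1 p.2 with hF
  set HH : ℝ × ℝ × ℝ → ℝ := fun p : ℝ × ℝ × ℝ => h p.1 p.2.1 p.2.2 with hHH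
  have hFd : Differentiable ℝ F := hz.differentiable (by simp)
  have hHd : Differentiable ℝ HH := hh.differentiable (by simp)
  have hψd : Differentiable ℝ ψ := hψ.differentiable (by simp)
  have hχd : Differentiable ℝ χ := hχ.differentiable (by simp)
  have hψ'd : Differentiable ℝ (deriv ψ) :=
    ((contDiff_infty_iff_deriv.mp (hψ.of_le (by simp))).2).differentiable (by simp)
  have hχ'd : Differentiable ℝ (deriv χ) :=
    ((contDiff_infty_iff_deriv.mp (hχ.of_le (by simp))).2).differentiable (by simp)
  -- first partials of z as fderiv applications
  have eDxz : ∀ a b : ℝ, Dx z a b = fderiv ℝ F (a, b) (1, 0) := fun a b =>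
    (slice_x (hFd (a, b)).hasFDerivAt).deriv
  have eDtz : ∀ a b : ℝ, Dt z a b = fderiv ℝ F (a, b) (0, 1) := fun a b =>
    (slice_t (hFd (a, b)).hasFDerivAt).deriv
  have hG1 : ContDiff ℝ (⊤ : ℕ∞) (fun p : ℝ × ℝ => fderiv ℝ F p (1, 0)) :=
    (hz.fderiv_right (by simp)).clm_apply contDiff_const
  have hG2 : ContDiff ℝ (⊤ : ℕ∞) (fun p : ℝ × ℝ => fderiv ℝ F p (0, 1)) :=
    (hz.fderiv_right (by simp)).clm_apply contDiff_const
  have hΦd : Differentiable ℝ (fderiv ℝ F) := (hz.fderiv_right (m := 1) (WithTop.coe_le_coe.mpr le_top)).differentiable (by simp)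
  -- HasDerivAt for the first partials (second partials as values)
  have Hu : HasDerivAt (fun s => z s t) (Dx z x t) x := by
    have := slice_x (hFd (x, t)).hasFDerivAt
    rwa [← eDxz x t] at this
  have Hut : HasDerivAt (fun s => z x s) (Dt z x t) t := by
    have := slice_t (hFd (x, t)).hasFDerivAt
    rwa [← eDtz x t] at this
  have eDx1 : (fun s => Dx z s t) = fun s => fderiv ℝ F (s, t) (1, 0) :=
    funext fun s => eDxz s t
  have eDx2 : (fun s => Dx z x s) = fun s => fderiv ℝ F (x, s) (1, 0) :=
    funext fun s => eDxz x s
  have eDt1 : (fun s => Dt z s t) = fun s => fderiv ℝ F (s, t) (0, 1) :=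
    funext fun s => eDtz s t
  have eDt2 : (fun s => Dt z x s) = fun s => fderiv ℝ F (x, s) (0, 1) :=
    funext fun s => eDtz x s
  have Hb : HasDerivAt (fun s => Dx z s t) (Dx (Dx z) x t) x := by
    have hd : DifferentiableAt ℝ (fun s => Dx z s t) x := by
      rw [eDx1]
      exact ((hG1.differentiable (by simp)) (x, t)).comp x
        ((differentiableAt_id (𝕜 := ℝ) (x := x)).prodMk (differentiableAt_const t))
    exact hd.hasDerivAt
  have Hc : HasDerivAt (fun s => Dt z s t) (Dx (Dt z) x t) x := by
    have hd : DifferentiableAt ℝ (fun s => Dt z s t) x := by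
      rw [eDt1]
      exact ((hG2.differentiable (by simp)) (x, t)).comp x
        ((differentiableAt_id (𝕜 := ℝ) (x := x)).prodMk (differentiableAt_const t))
    exact hd.hasDerivAt
  have Hbt : HasDerivAt (fun s => Dx z x s) (Dt (Dx z) x t) t := by
    have hd : DifferentiableAt ℝ (fun s => Dx z x s) t := by
      rw [eDx2]
      exact ((hG1.differentiable (by simp)) (x, t)).comp t
        ((differentiableAt_const x).prodMk (differentiableAt_id (𝕜 := ℝ) (x := t)))
    exact hd.hasDerivAt
  have Hct : HasDerivAt (fun s => Dt z x s) (Dt (Dt z) x t) t := by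
    have hd : DifferentiableAt ℝ (fun s => Dt z x s) t := by
      rw [eDt2]
      exact ((hG2.differentiable (by simp)) (x, t)).comp t
        ((differentiableAt_const x).prodMk (differentiableAt_id (𝕜 := ℝ) (x := t)))
    exact hd.hasDerivAt
  -- symmetry of second derivatives
  have symm2 : Dx (Dt z) x t = Dt (Dx z) x t := by
    have hf'' := (hΦd (x, t)).hasFDerivAt
    have hsym := second_derivative_symmetric (f := F) (fun y => (hFd y).hasFDerivAt) hf''
    have h2 : HasFDerivAt (fun p : ℝ × ℝ => fderiv ℝ F p (0, 1))
        ((ContinuousLinearMap.apply ℝ ℝ ((0:ℝ), (1:ℝ))).comp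
          (fderiv ℝ (fderiv ℝ F) (x, t))) (x, t) :=
      (ContinuousLinearMap.apply ℝ ℝ ((0:ℝ), (1:ℝ))).hasFDerivAt.comp (x, t) hf''
    have h1 : HasFDerivAt (fun p : ℝ × ℝ => fderiv ℝ F p (1, 0))
        ((ContinuousLinearMap.apply ℝ ℝ ((1:ℝ), (0:ℝ))).comp
          (fderiv ℝ (fderiv ℝ F) (x, t))) (x, t) :=
      (ContinuousLinearMap.apply ℝ ℝ ((1:ℝ), (0:ℝ))).hasFDerivAt.comp (x, t) hf''
    have e1 : Dx (Dt z) x t = fderiv ℝ (fderiv ℝ F) (x, t) (1, 0) (0, 1) := by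
      show deriv (fun s => Dt z s t) x = _
      rw [eDt1]
      simpa using (slice_x h2).deriv
    have e2 : Dt (Dx z) x t = fderiv ℝ (fderiv ℝ F) (x, t) (0, 1) (1, 0) := by
      show deriv (fun s => Dx z x s) t = _
      rw [eDx2]
      simpa using (slice_t h1).deriv
    rw [e1, e2, hsym (1, 0) (0, 1)]
  -- partials of h
  have hHfd := (hHd (z x t, Dx z x t, Dt z x t)).hasFDerivAt
  set L := fderiv ℝ HH (z x t, Dx z x t, Dt z x t) with hLdef
  have eq1 : hz' (z x t) (Dx z x t) (Dt z x t) = L (1, 0, 0) := (slice3_1 hHfd).deriv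
  have eq2 : hzx (z x t) (Dx z x t) (Dt z x t) = L (0, 1, 0) := (slice3_2 hHfd).deriv
  have eq3 : hzt (z x t) (Dx z x t) (Dt z x t) = L (0, 0, 1) := (slice3_3 hHfd).deriv
  have hp3 : L (0, 0, 1) ≠ 0 := by rw [← eq3]; exact hhzt _ _ _
  have hP : ψ (z x t) ≠ 0 := hψne _
  -- chain rules for h along x and t
  have Hh_x : HasDerivAt (fun s => h (z s t) (Dx z s t) (Dt z s t))
      (Dx z x t * L (1, 0, 0) + Dx (Dx z) x t * L (0, 1, 0) + Dx (Dt z) x t * L (0, 0, 1)) x :=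
    comp3 (a := fun s => z s t) (b := fun s => Dx z s t) (c := fun s => Dt z s t) hHfd Hu Hb Hc
  have Hh_t : HasDerivAt (fun s => h (z x s) (Dx z x s) (Dt z x s))
      (Dt z x t * L (1, 0, 0) + Dt (Dx z) x t * L (0, 1, 0) + Dt (Dt z) x t * L (0, 0, 1)) t :=
    comp3 (a := fun s => z x s) (b := fun s => Dx z x s) (c := fun s => Dt z x s) hHfd Hut Hbt Hct
  -- derivatives of ψ, χ, ψ', χ' along x
  have Hψx : HasDerivAt (fun s => ψ (z s t)) (deriv ψ (z x t) * Dx z x t) x :=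
    ((hψd (z x t)).hasDerivAt).comp x Hu
  have Hχx : HasDerivAt (fun s => χ (z s t)) (deriv χ (z x t) * Dx z x t) x :=
    ((hχd (z x t)).hasDerivAt).comp x Hu
  have Hψ't : HasDerivAt (fun s => ψ (z x s)) (deriv ψ (z x t) * Dt z x t) t :=
    ((hψd (z x t)).hasDerivAt).comp t Hut
  have Hχ't : HasDerivAt (fun s => χ (z x s)) (deriv χ (z x t) * Dt z x t) t :=
    ((hχd (z x t)).hasDerivAt).comp t Hut
  have HP1x : HasDerivAt (fun s => deriv ψ (z s t)) (deriv (deriv ψ) (z x t) * Dx z x t) x :=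
    ((hψ'd (z x t)).hasDerivAt).comp (h₂ := deriv ψ) x Hu
  have HX1x : HasDerivAt (fun s => deriv χ (z s t)) (deriv (deriv χ) (z x t) * Dx z x t) x :=
    ((hχ'd (z x t)).hasDerivAt).comp (h₂ := deriv χ) x Hu
  -- derivative of f12 along x
  have Hinner : HasDerivAt (fun s => χ (z s t) * h (z s t) (Dx z s t) (Dt z s t)
      + ε * Dt z s t * deriv ψ (z s t) - ε * Dx z s t * deriv χ (z s t))
      ((deriv χ (z x t) * Dx z x t) * h (z x t) (Dx z x t) (Dt z x t)
        + χ (z x t) * (Dx z x t * L (1, 0, 0) + Dx (Dx z) x t * L (0, 1, 0)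
            + Dx (Dt z) x t * L (0, 0, 1))
        + ((ε * Dx (Dt z) x t) * deriv ψ (z x t)
            + (ε * Dt z x t) * (deriv (deriv ψ) (z x t) * Dx z x t))
        - ((ε * Dx (Dx z) x t) * deriv χ (z x t)
            + (ε * Dx z x t) * (deriv (deriv χ) (z x t) * Dx z x t))) x :=
    ((Hχx.mul Hh_x).add ((Hc.const_mul ε).mul HP1x)).sub ((Hb.const_mul ε).mul HX1x)
  have Houter := ((hasDerivAt_const x (1:ℝ)).div Hψx hP).mul Hinner
  have Ex12 : Dx f12 x t = (0 * ψ (z x t) - 1 * (deriv ψ (z x t) * Dx z x t)) / ψ (z x t) ^ 2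
      * (χ (z x t) * h (z x t) (Dx z x t) (Dt z x t)
        + ε * Dt z x t * deriv ψ (z x t) - ε * Dx z x t * deriv χ (z x t))
      + (1 / ψ (z x t))
        * ((deriv χ (z x t) * Dx z x t) * h (z x t) (Dx z x t) (Dt z x t)
          + χ (z x t) * (Dx z x t * L (1, 0, 0) + Dx (Dx z) x t * L (0, 1, 0)
              + Dx (Dt z) x t * L (0, 0, 1))
          + ((ε * Dx (Dt z) x t) * deriv ψ (z x t)
              + (ε * Dt z x t) * (deriv (deriv ψ) (z x t) * Dx z x t))
          - ((ε * Dx (Dx z) x t) * deriv χ (z x t)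
              + (ε * Dx z x t) * (deriv (deriv χ) (z x t) * Dx z x t))) := Houter.deriv
  rw [symm2] at Ex12
  have Et11 : Dt f11 x t = Dt z x t * L (1, 0, 0) + Dt (Dx z) x t * L (0, 1, 0)
      + Dt (Dt z) x t * L (0, 0, 1) := Hh_t.deriv
  -- the easy derivatives
  have Ex22 : Dx f22 x t = deriv χ (z x t) * Dx z x t := Hχx.deriv
  have Et21 : Dt f21 x t = deriv ψ (z x t) * Dt z x t := Hψ't.deriv
  have Ex32 : Dx f32 x t = ε * (deriv χ (z x t) * Dx z x t) := (Hχx.const_mul ε).deriv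
  have Et31 : Dt f31 x t = ε * (deriv ψ (z x t) * Dt z x t) := (Hψ't.const_mul ε).deriv
  -- quotient derivatives appearing in C
  have ed1 : deriv (fun y => χ y / ψ y) (z x t)
      = (deriv χ (z x t) * ψ (z x t) - χ (z x t) * deriv ψ (z x t)) / ψ (z x t) ^ 2 :=
    (((hχd (z x t)).hasDerivAt).div ((hψd (z x t)).hasDerivAt) hP).deriv
  have ed2 : deriv (fun y => deriv ψ y / ψ y) (z x t)
      = (deriv (deriv ψ) (z x t) * ψ (z x t) - deriv ψ (z x t) * deriv ψ (z x t))
          / ψ (z x t) ^ 2 :=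
    (((hψ'd (z x t)).hasDerivAt).div ((hψd (z x t)).hasDerivAt) hP).deriv
  have ed3 : deriv (fun y => deriv χ y / ψ y) (z x t)
      = (deriv (deriv χ) (z x t) * ψ (z x t) - deriv χ (z x t) * deriv ψ (z x t))
          / ψ (z x t) ^ 2 :=
    (((hχ'd (z x t)).hasDerivAt).div ((hψd (z x t)).hasDerivAt) hP).deriv
  -- rewrite the PDE
  have eA : A (z x t) (Dx z x t) (Dt z x t)
      = (1 / (ψ (z x t) * hzt (z x t) (Dx z x t) (Dt z x t)))
        * (χ (z x t) * hzx (z x t) (Dx z x t) (Dt z x t) - ε * deriv χ (z x t)) := rfl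
  have eB : B (z x t) (Dx z x t) (Dt z x t)
      = χ (z x t) / ψ (z x t) - (1 / hzt (z x t) (Dx z x t) (Dt z x t))
        * (hzx (z x t) (Dx z x t) (Dt z x t) - ε * deriv ψ (z x t) / ψ (z x t)) := rfl
  have eC : C (z x t) (Dx z x t) (Dt z x t)
      = (1 / hzt (z x t) (Dx z x t) (Dt z x t)) * (-(Dt z x t) * hz' (z x t) (Dx z x t) (Dt z x t)
        + Dx z x t * (deriv (fun u => χ u / ψ u) (z x t) * h (z x t) (Dx z x t) (Dt z x t)
          + (χ (z x t) / ψ (z x t)) * hz' (z x t) (Dx z x t) (Dt z x t)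
          + ε * Dt z x t * deriv (fun u => deriv ψ u / ψ u) (z x t)
          - ε * Dx z x t * deriv (fun u => deriv χ u / ψ u) (z x t))) := rfl
  rw [eq2, eq3] at eA
  rw [eq2, eq3] at eB
  rw [eq1, eq3, ed1, ed2, ed3] at eC
  have pde' := pde x t
  rw [eA, eB, eC] at pde'
  have e11 : f11 x t = h (z x t) (Dx z x t) (Dt z x t) := rfl
  have e12 : f12 x t = (1 / ψ (z x t)) * (χ (z x t) * h (z x t) (Dx z x t) (Dt z x t)
      + ε * Dt z x t * deriv ψ (z x t) - ε * Dx z x t * deriv χ (z x t)) := rfl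
  have e21 : f21 x t = ψ (z x t) := rfl
  have e22 : f22 x t = χ (z x t) := rfl
  have e31 : f31 x t = ε * ψ (z x t) := rfl
  have e32 : f32 x t = ε * χ (z x t) := rfl
  refine ⟨?_, ?_, ?_⟩
  · rw [Ex12, Et11, e21, e22, e31, e32, pde']
    field_simp
    rcases hε with rfl | rfl <;> ring
  · rw [Ex22, Et21, e11, e12, e31, e32]
    field_simp
    rcases hε with rfl | rfl <;> ring
  · rw [Ex32, Et31, e11, e12, e21, e22]
    field_simp
    rcases hε with rfl | rfl <;> ring
end

section
/- Let m₁, m₂ ∈ ℝ, η ≠ 0, let ℓ be a differentiable real function, and let z : ℝ² → ℝ be a smooth nonvanishing function satisfying z_{tt} = m₁ m₂ z_{xx} + (m₁ − m₂) z_{xt} + (m₁ z_x − z_t) ℓ'(z). Fix a sign ε = ±1 and define f11 = z_t + (m₂ + ε/z) z_x + ℓ(z), f12 = m₁ m₂ z_x + (m₁ + ε/z) z_t + m₁ ℓ(z), f21 = η z, f22 = η m₁ z, f31 = ε η z, f32 = ε η m₁ z. Then the pseudospherical structure-equation identities hold: D_x f12 − D_t f11 = f31 f22 − f32 f21, D_x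 f22 − D_t f21 = f11 f32 − f12 f31, D_x f32 − D_t f31 = f11 f22 − f12 f21. -/
private lemma line_x (t x : ℝ) : HasDerivAt (fun s : ℝ => (s, t)) ((1 : ℝ), (0 : ℝ)) x :=
  (hasDerivAt_id x).prodMk (hasDerivAt_const x t)

private lemma line_t (x t : ℝ) : HasDerivAt (fun s : ℝ => (x, s)) ((0 : ℝ), (1 : ℝ)) t :=
  (hasDerivAt_const t x).prodMk (hasDerivAt_id t)

/-- Example 5.4: `z_{tt} = m₁ m₂ z_{xx} + (m₁ − m₂) z_{xt} + (m₁ z_x − z_t) ℓ'(z)`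
describes pseudospherical surfaces. -/
theorem example54_describes_pss (m1 m2 η ε : ℝ) (hη : η ≠ 0) (hε : ε = 1 ∨ ε = -1)
    (ℓ : ℝ → ℝ) (hℓ : ContDiff ℝ (⊤ : ℕ∞) ℓ)
    (z : ℝ → ℝ → ℝ) (hz : ContDiff ℝ (⊤ : ℕ∞) fun p : ℝ × ℝ => z p.1 p.2)
    (hzne : ∀ x t, z x t ≠ 0)
    (hPDE : ∀ x t, Dt (Dt z) x t =
      m1 * m2 * Dx (Dx z) x t + (m1 - m2) * Dt (Dx z) x t
        + (m1 * Dx z x t - Dt z x t) * deriv ℓ (z x t)) :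
    let f11 : ℝ → ℝ → ℝ := fun x t =>
      Dt z x t + (m2 + ε / z x t) * Dx z x t + ℓ (z x t)
    let f12 : ℝ → ℝ → ℝ := fun x t =>
      m1 * m2 * Dx z x t + (m1 + ε / z x t) * Dt z x t + m1 * ℓ (z x t)
    let f21 : ℝ → ℝ → ℝ := fun x t => η * z x t
    let f22 : ℝ → ℝ → ℝ := fun x t => η * m1 * z x t
    let f31 : ℝ → ℝ → ℝ := fun x t => ε * η * z x t
    let f32 : ℝ → ℝ → ℝ := fun x t => ε * η * m1 * z x t
    ∀ x t : ℝ,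
      Dx f12 x t - Dt f11 x t = f31 x t * f22 x t - f32 x t * f21 x t ∧
      Dx f22 x t - Dt f21 x t = f11 x t * f32 x t - f12 x t * f31 x t ∧
      Dx f32 x t - Dt f31 x t = f11 x t * f22 x t - f12 x t * f21 x t := by
  intro f11 f12 f21 f22 f31 f32 x t
  have hZd : Differentiable ℝ (fun p : ℝ × ℝ => z p.1 p.2) := hz.differentiable (by simp)
  set F := fderiv ℝ (fun p : ℝ × ℝ => z p.1 p.2) with hFdef
  have hF : ContDiff ℝ (⊤ : ℕ∞) F :=
    (contDiff_infty_iff_fderiv.mp (hz.of_le (by simp))).2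
  have hFd : Differentiable ℝ F := hF.differentiable (by simp)
  have hℓd : ∀ y, HasDerivAt ℓ (deriv ℓ y) y :=
    fun y => (hℓ.differentiable (by simp) y).hasDerivAt
  -- first partial derivatives
  have hzx : ∀ a b, HasDerivAt (fun s => z s b) (F (a, b) (1, 0)) a := by
    intro a b
    exact
      (hZd (a, b)).hasFDerivAt.comp_hasDerivAt a (line_x b a)
  have hzt : ∀ a b, HasDerivAt (fun s => z a s) (F (a, b) (0, 1)) b := by
    intro a b
    exact
      (hZd (a, b)).hasFDerivAt.comp_hasDerivAt b (line_t a b)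
  have Dxz : ∀ a b, Dx z a b = F (a, b) (1, 0) := fun a b => (hzx a b).deriv
  have Dtz : ∀ a b, Dt z a b = F (a, b) (0, 1) := fun a b => (hzt a b).deriv
  -- second derivative at (x, t)
  set S := fderiv ℝ F (x, t) with hSdef
  have hFx : ∀ v : ℝ × ℝ, HasDerivAt (fun s => F (s, t) v) (S (1, 0) v) x := by
    intro v
    have h1 : HasDerivAt (fun s => F (s, t)) (S (1, 0)) x := by
      exact
        (hFd (x, t)).hasFDerivAt.comp_hasDerivAt x (line_x t x)
    simpa using h1.clm_apply (hasDerivAt_const x v)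
  have hFt : ∀ v : ℝ × ℝ, HasDerivAt (fun s => F (x, s) v) (S (0, 1) v) t := by
    intro v
    have h1 : HasDerivAt (fun s => F (x, s)) (S (0, 1)) t := by
      exact
        (hFd (x, t)).hasFDerivAt.comp_hasDerivAt t (line_t x t)
    simpa using h1.clm_apply (hasDerivAt_const t v)
  have hsymm : S (1, 0) (0, 1) = S (0, 1) (1, 0) :=
    second_derivative_symmetric (fun y => (hZd y).hasFDerivAt)
      ((hFd (x, t)).hasFDerivAt) _ _
  -- second partials as values of S
  have DxDxz : Dx (Dx z) x t = S (1, 0) (1, 0) := by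
    have hfun : (fun s => Dx z s t) = fun s => F (s, t) (1, 0) :=
      funext fun s => Dxz s t
    show deriv (fun s => Dx z s t) x = _
    rw [hfun]; exact (hFx (1, 0)).deriv
  have DtDxz : Dt (Dx z) x t = S (0, 1) (1, 0) := by
    have hfun : (fun s => Dx z x s) = fun s => F (x, s) (1, 0) :=
      funext fun s => Dxz x s
    show deriv (fun s => Dx z x s) t = _
    rw [hfun]; exact (hFt (1, 0)).deriv
  have DtDtz : Dt (Dt z) x t = S (0, 1) (0, 1) := by
    have hfun : (fun s => Dt z x s) = fun s => F (x, s) (0, 1) :=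
      funext fun s => Dtz x s
    show deriv (fun s => Dt z x s) t = _
    rw [hfun]; exact (hFt (0, 1)).deriv
  -- the PDE in terms of S
  have hpde : S (0, 1) (0, 1) =
      m1 * m2 * S (1, 0) (1, 0) + (m1 - m2) * S (0, 1) (1, 0)
        + (m1 * F (x, t) (1, 0) - F (x, t) (0, 1)) * deriv ℓ (z x t) := by
    have hP := hPDE x t
    rw [DtDtz, DxDxz, DtDxz, Dxz x t, Dtz x t] at hP
    exact hP
  -- derivatives of the entries
  have hf12 : (fun s => f12 s t) = fun s =>
      m1 * m2 * F (s, t) (1, 0) + (m1 + ε * (z s t)⁻¹) * F (s, t) (0, 1)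
        + m1 * ℓ (z s t) := by
    funext s; simp only [f12, Dxz, Dtz, div_eq_mul_inv]
  have hder12 : HasDerivAt (fun s => f12 s t)
      (m1 * m2 * S (1, 0) (1, 0)
        + ((ε * (-(F (x, t) (1, 0)) / z x t ^ 2)) * F (x, t) (0, 1)
          + (m1 + ε * (z x t)⁻¹) * S (1, 0) (0, 1))
        + m1 * (deriv ℓ (z x t) * F (x, t) (1, 0))) x := by
    rw [hf12]
    exact (((hFx (1, 0)).const_mul (m1 * m2)).add
      (((((hzx x t).inv (hzne x t)).const_mul ε).const_add m1).mul (hFx (0, 1)))).add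
      (((hℓd (z x t)).comp x (hzx x t)).const_mul m1)
  have hf11 : (fun s => f11 x s) = fun s =>
      F (x, s) (0, 1) + (m2 + ε * (z x s)⁻¹) * F (x, s) (1, 0) + ℓ (z x s) := by
    funext s; simp only [f11, Dxz, Dtz, div_eq_mul_inv]
  have hder11 : HasDerivAt (fun s => f11 x s)
      (S (0, 1) (0, 1)
        + ((ε * (-(F (x, t) (0, 1)) / z x t ^ 2)) * F (x, t) (1, 0)
          + (m2 + ε * (z x t)⁻¹) * S (0, 1) (1, 0))
        + deriv ℓ (z x t) * F (x, t) (0, 1)) t := by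
    rw [hf11]
    exact ((hFt (0, 1)).add
      (((((hzt x t).inv (hzne x t)).const_mul ε).const_add m2).mul (hFt (1, 0)))).add
      ((hℓd (z x t)).comp t (hzt x t))
  have hder22 : HasDerivAt (fun s => f22 s t) (η * m1 * F (x, t) (1, 0)) x := by
    simp only [f22]; exact (hzx x t).const_mul (η * m1)
  have hder21 : HasDerivAt (fun s => f21 x s) (η * F (x, t) (0, 1)) t := by
    simp only [f21]; exact (hzt x t).const_mul η
  have hder32 : HasDerivAt (fun s => f32 s t) (ε * η * m1 * F (x, t) (1, 0)) x := by
    simp only [f32]; exact (hzx x t).const_mul (ε * η * m1)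
  have hder31 : HasDerivAt (fun s => f31 x s) (ε * η * F (x, t) (0, 1)) t := by
    simp only [f31]; exact (hzt x t).const_mul (ε * η)
  have hε2 : ε * ε = 1 := by rcases hε with rfl | rfl <;> norm_num
  have e2 : z x t * (z x t)⁻¹ = 1 := mul_inv_cancel₀ (hzne x t)
  refine ⟨?_, ?_, ?_⟩
  · show deriv (fun s => f12 s t) x - deriv (fun s => f11 x s) t = _
    rw [hder12.deriv, hder11.deriv, hsymm, hpde]
    simp only [f31, f22, f32, f21]
    ring
  · show deriv (fun s => f22 s t) x - deriv (fun s => f21 x s) t = _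
    rw [hder22.deriv, hder21.deriv]
    simp only [f11, f12, f31, f32, Dxz x t, Dtz x t]
    linear_combination (-(ε * ε * η * (m1 * F (x, t) (1, 0) - F (x, t) (0, 1)))) * e2
      + (-(η * (m1 * F (x, t) (1, 0) - F (x, t) (0, 1)))) * hε2
  · show deriv (fun s => f32 s t) x - deriv (fun s => f31 x s) t = _
    rw [hder32.deriv, hder31.deriv]
    simp only [f11, f12, f21, f22, Dxz x t, Dtz x t]
    linear_combination (-(ε * η * (m1 * F (x, t) (1, 0) - F (x, t) (0, 1)))) * e2
end

section
/- Let δ = ±1, η ≠ 0, and let z : ℝ² → ℝ be a smooth function such that z_x − z z_t and z z_x are nonvanishing and z satisfies z_{tt} = −(z_t/(z z_x)) z_{xx} + ((z z_t + z_x)/(z z_x)) z_{xt} − δ ((z z_t − z_x)³/(z z_x)). Define f11 = δ η z z_t/(z_x − z z_t), f12 = δ η z_t/(z_x − z z_t), f21 = z_x, f22 = z_t, f31 = η z, f32 = η. Then the structure-equation identities hold: D_x f12 − D_t f11 = f31 f22 − f32 f21, D_x f22 − D_t f21 = f11 f32 − f12 f31, D_x f32 − D_t f31 = δ (f11 f22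 − f12 f21). -/
/-- Example 5.5: the equation
`z_{tt} = −(z_t/(z z_x)) z_{xx} + ((z z_t + z_x)/(z z_x)) z_{xt} − δ (z z_t − z_x)³/(z z_x)`
describes pss (δ=1) or ss (δ=−1). -/
theorem example55_describes_pss_ss (δ η : ℝ) (hδ : δ = 1 ∨ δ = -1) (hη : η ≠ 0)
    (z : ℝ → ℝ → ℝ) (hz : ContDiff ℝ (⊤ : ℕ∞) fun p : ℝ × ℝ => z p.1 p.2)
    (hne1 : ∀ x t, Dx z x t - z x t * Dt z x t ≠ 0)
    (hne2 : ∀ x t, z x t * Dx z x t ≠ 0)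
    (hPDE : ∀ x t, Dt (Dt z) x t =
      -(Dt z x t / (z x t * Dx z x t)) * Dx (Dx z) x t
        + ((z x t * Dt z x t + Dx z x t) / (z x t * Dx z x t)) * Dt (Dx z) x t
        - δ * (z x t * Dt z x t - Dx z x t) ^ 3 / (z x t * Dx z x t)) :
    let f11 : ℝ → ℝ → ℝ := fun x t =>
      δ * η * z x t * Dt z x t / (Dx z x t - z x t * Dt z x t)
    let f12 : ℝ → ℝ → ℝ := fun x t =>
      δ * η * Dt z x t / (Dx z x t - z x t * Dt z x t)
    let f21 : ℝ → ℝ → ℝ := fun x t => Dx z x t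
    let f22 : ℝ → ℝ → ℝ := fun x t => Dt z x t
    let f31 : ℝ → ℝ → ℝ := fun x t => η * z x t
    let f32 : ℝ → ℝ → ℝ := fun _ _ => η
    ∀ x t : ℝ,
      Dx f12 x t - Dt f11 x t = f31 x t * f22 x t - f32 x t * f21 x t ∧
      Dx f22 x t - Dt f21 x t = f11 x t * f32 x t - f12 x t * f31 x t ∧
      Dx f32 x t - Dt f31 x t = δ * (f11 x t * f22 x t - f12 x t * f21 x t) := by
  intro f11 f12 f21 f22 f31 f32 x t
  have hδ2 : δ * δ = 1 := by rcases hδ with h | h <;> subst h <;> norm_num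
  have hzd := hz.differentiable (by simp)
  have hz1 : ContDiff ℝ (⊤ : ℕ∞) (fderiv ℝ (fun p : ℝ × ℝ => z p.1 p.2)) := hz.fderiv_right (by simp)
  have hzd1 := hz1.differentiable (by simp)
  have hcX : ∀ a b : ℝ, HasDerivAt (fun s : ℝ => ((s, b) : ℝ × ℝ)) ((1 : ℝ), (0 : ℝ)) a :=
    fun a b => HasDerivAt.prodMk (hasDerivAt_id a) (hasDerivAt_const a b)
  have hcT : ∀ a b : ℝ, HasDerivAt (fun s : ℝ => ((a, s) : ℝ × ℝ)) ((0 : ℝ), (1 : ℝ)) b :=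
    fun a b => HasDerivAt.prodMk (hasDerivAt_const b a) (hasDerivAt_id b)
  have hZx : ∀ a b : ℝ, HasDerivAt (fun s => z s b)
      (fderiv ℝ (fun p : ℝ × ℝ => z p.1 p.2) (a, b) (1, 0)) a := fun a b => by
    simpa [Function.comp_def] using ((hzd (a, b)).hasFDerivAt).comp_hasDerivAt a (hcX a b)
  have hZt : ∀ a b : ℝ, HasDerivAt (fun s => z a s)
      (fderiv ℝ (fun p : ℝ × ℝ => z p.1 p.2) (a, b) (0, 1)) b := fun a b => by
    simpa [Function.comp_def] using ((hzd (a, b)).hasFDerivAt).comp_hasDerivAt b (hcT a b)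
  have hDx : ∀ a b : ℝ, Dx z a b = fderiv ℝ (fun p : ℝ × ℝ => z p.1 p.2) (a, b) (1, 0) :=
    fun a b => (hZx a b).deriv
  have hDt : ∀ a b : ℝ, Dt z a b = fderiv ℝ (fun p : ℝ × ℝ => z p.1 p.2) (a, b) (0, 1) :=
    fun a b => (hZt a b).deriv
  have hF2x : ∀ (a b : ℝ) (v : ℝ × ℝ),
      HasDerivAt (fun s => fderiv ℝ (fun p : ℝ × ℝ => z p.1 p.2) (s, b) v)
        (fderiv ℝ (fderiv ℝ (fun p : ℝ × ℝ => z p.1 p.2)) (a, b) (1, 0) v) a := fun a b v => by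
    simpa [Function.comp_def] using (((ContinuousLinearMap.apply ℝ ℝ v).hasFDerivAt.comp (a, b)
      ((hzd1 (a, b)).hasFDerivAt)).comp_hasDerivAt a (hcX a b))
  have hF2t : ∀ (a b : ℝ) (v : ℝ × ℝ),
      HasDerivAt (fun s => fderiv ℝ (fun p : ℝ × ℝ => z p.1 p.2) (a, s) v)
        (fderiv ℝ (fderiv ℝ (fun p : ℝ × ℝ => z p.1 p.2)) (a, b) (0, 1) v) b := fun a b v => by
    simpa [Function.comp_def] using (((ContinuousLinearMap.apply ℝ ℝ v).hasFDerivAt.comp (a, b)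
      ((hzd1 (a, b)).hasFDerivAt)).comp_hasDerivAt b (hcT a b))
  have hsymm : ∀ v w : ℝ × ℝ,
      fderiv ℝ (fderiv ℝ (fun p : ℝ × ℝ => z p.1 p.2)) (x, t) v w
        = fderiv ℝ (fderiv ℝ (fun p : ℝ × ℝ => z p.1 p.2)) (x, t) w v :=
    fun v w => second_derivative_symmetric (fun y => (hzd y).hasFDerivAt)
      ((hzd1 (x, t)).hasFDerivAt) v w
  -- first partial derivatives as HasDerivAt at (x,t)
  have Hzx : HasDerivAt (fun s => z s t) (Dx z x t) x := by rw [hDx]; exact hZx x t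
  have Hzt : HasDerivAt (fun s => z x s) (Dt z x t) t := by rw [hDt]; exact hZt x t
  -- second partial derivatives
  have hfunqx : (fun s => Dt z s t) = fun s =>
      fderiv ℝ (fun p : ℝ × ℝ => z p.1 p.2) (s, t) (0, 1) := funext fun s => hDt s t
  have hfunqt : (fun s => Dt z x s) = fun s =>
      fderiv ℝ (fun p : ℝ × ℝ => z p.1 p.2) (x, s) (0, 1) := funext fun s => hDt x s
  have hfunpx : (fun s => Dx z s t) = fun s =>
      fderiv ℝ (fun p : ℝ × ℝ => z p.1 p.2) (s, t) (1, 0) := funext fun s => hDx s t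
  have hfunpt : (fun s => Dx z x s) = fun s =>
      fderiv ℝ (fun p : ℝ × ℝ => z p.1 p.2) (x, s) (1, 0) := funext fun s => hDx x s
  have Hqx : HasDerivAt (fun s => Dt z s t)
      (fderiv ℝ (fderiv ℝ (fun p : ℝ × ℝ => z p.1 p.2)) (x, t) (1, 0) (0, 1)) x := by
    rw [hfunqx]; exact hF2x x t (0, 1)
  have Hqt : HasDerivAt (fun s => Dt z x s)
      (fderiv ℝ (fderiv ℝ (fun p : ℝ × ℝ => z p.1 p.2)) (x, t) (0, 1) (0, 1)) t := by
    rw [hfunqt]; exact hF2t x t (0, 1)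
  have Hpx : HasDerivAt (fun s => Dx z s t)
      (fderiv ℝ (fderiv ℝ (fun p : ℝ × ℝ => z p.1 p.2)) (x, t) (1, 0) (1, 0)) x := by
    rw [hfunpx]; exact hF2x x t (1, 0)
  have Hpt : HasDerivAt (fun s => Dx z x s)
      (fderiv ℝ (fderiv ℝ (fun p : ℝ × ℝ => z p.1 p.2)) (x, t) (0, 1) (1, 0)) t := by
    rw [hfunpt]; exact hF2t x t (1, 0)
  -- names
  set a := z x t with ha
  set p := Dx z x t with hp
  set q := Dt z x t with hq
  set r := fderiv ℝ (fderiv ℝ (fun p : ℝ × ℝ => z p.1 p.2)) (x, t) (1, 0) (1, 0) with hr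
  set s1 := fderiv ℝ (fderiv ℝ (fun p : ℝ × ℝ => z p.1 p.2)) (x, t) (1, 0) (0, 1) with hs1
  set s2 := fderiv ℝ (fderiv ℝ (fun p : ℝ × ℝ => z p.1 p.2)) (x, t) (0, 1) (1, 0) with hs2
  set u := fderiv ℝ (fderiv ℝ (fun p : ℝ × ℝ => z p.1 p.2)) (x, t) (0, 1) (0, 1) with hu
  have hs12 : s1 = s2 := hsymm (1, 0) (0, 1)
  have hW : p - a * q ≠ 0 := hne1 x t
  have hap : a * p ≠ 0 := hne2 x t
  -- rewrite the PDE
  have hP : u = -(q / (a * p)) * r + ((a * q + p) / (a * p)) * s2 - δ * (a * q - p) ^ 3 / (a * p) := by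
    have h := hPDE x t
    have e1 : Dt (Dt z) x t = u := by
      show deriv (fun s => Dt z x s) t = u
      rw [Hqt.deriv]
    have e2 : Dx (Dx z) x t = r := by
      show deriv (fun s => Dx z s t) x = r
      rw [Hpx.deriv]
    have e3 : Dt (Dx z) x t = s2 := by
      show deriv (fun s => Dx z x s) t = s2
      rw [Hpt.deriv]
    rw [e1, e2, e3] at h
    exact h
  refine ⟨?_, ?_, ?_⟩
  · -- equation 1
    show deriv (fun s => δ * η * Dt z s t / (Dx z s t - z s t * Dt z s t)) x
        - deriv (fun s => δ * η * z x s * Dt z x s / (Dx z x s - z x s * Dt z x s)) t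
        = η * z x t * Dt z x t - η * Dx z x t
    have H12 : HasDerivAt (fun s => δ * η * Dt z s t / (Dx z s t - z s t * Dt z s t))
        ((δ * η * s1 * (p - a * q) - δ * η * q * (r - (p * q + a * s1))) / (p - a * q) ^ 2)
        x := by
      exact (HasDerivAt.const_mul (δ * η) Hqx).div (Hpx.sub (Hzx.mul Hqx)) (hne1 x t)
    have H11 : HasDerivAt (fun s => δ * η * z x s * Dt z x s / (Dx z x s - z x s * Dt z x s))
        (((δ * η * q * q + δ * η * a * u) * (p - a * q)
            - δ * η * a * q * (s2 - (q * q + a * u))) / (p - a * q) ^ 2) t := by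
      exact ((HasDerivAt.const_mul (δ * η) Hzt).mul Hqt).div (Hpt.sub (Hzt.mul Hqt)) (hne1 x t)
    rw [H12.deriv, H11.deriv, ← hp, ← hq, ← ha, hs12]
    have hP' : a * p * u = -(q * r) + (a * q + p) * s2 - δ * (a * q - p) ^ 3 := by
      have ha0 : a ≠ 0 := left_ne_zero_of_mul hap
      have hp0 : p ≠ 0 := right_ne_zero_of_mul hap
      rw [hP]; field_simp
    rw [div_sub_div_same, div_eq_iff (pow_ne_zero 2 hW)]
    linear_combination (-(δ * η)) * hP' + η * (a * q - p) ^ 3 * hδ2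
  · -- equation 2
    show deriv (fun s => Dt z s t) x - deriv (fun s => Dx z x s) t
        = δ * η * z x t * Dt z x t / (Dx z x t - z x t * Dt z x t) * η
          - δ * η * Dt z x t / (Dx z x t - z x t * Dt z x t) * (η * z x t)
    rw [Hqx.deriv, Hpt.deriv]
    rw [← hp, ← hq, ← ha]
    rw [hs12]
    ring
  · -- equation 3
    show deriv (fun _ : ℝ => η) x - deriv (fun s => η * z x s) t
        = δ * (δ * η * z x t * Dt z x t / (Dx z x t - z x t * Dt z x t) * Dt z x t
          - δ * η * Dt z x t / (Dx z x t - z x t * Dt z x t) * Dx z x t)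
    rw [deriv_const, (Hzt.const_mul η).deriv]
    rw [← hp, ← hq, ← ha]
    field_simp
    rw [eq_div_iff (by rwa [mul_comm q a])]
    linear_combination η * q * (p - a*q) * hδ2
end

section
/- Let m ≠ 0, δ = ±1, p, q ∈ ℤ with q ≠ 0, and let z : ℝ² → ℝ be a smooth positive function satisfying z_{tt} = −(p/q) z^{2(p−q)} z_{xx} + (p/q + 1) z^{p−q} z_{xt} − (p/q)(2p−q−1) z^{2(p−q)−1} z_x² + ((p−1)(p+q)/q) z^{p−q−1} z_x z_t − (q−1) z_t²/z + (δ m²/q) z. Define f11 = (δp/m) z^{p−1} z_x − (δq/m) z^{q−1} z_t, f12 = (δp/m) z^{2p−q−1} z_x − (δq/m) z^{p−1} z_t, f21 = 0, f22 = m, f31 = z^q, f32 = z^p. Then the structure-equation identities hold: D_x f12 − D_t f11 = f31 f22 − f32 f21, D_x f22 − D_t f21 = f11 f32 − f12 f31, D_x f32 − D_t f31 = δ (f11 f22 − f12 f21). -/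
noncomputable def px (z : ℝ → ℝ → ℝ) : ℝ → ℝ → ℝ :=
  fun x t => fderiv ℝ (fun p : ℝ × ℝ => z p.1 p.2) (x, t) (1, 0)

noncomputable def pt (z : ℝ → ℝ → ℝ) : ℝ → ℝ → ℝ :=
  fun x t => fderiv ℝ (fun p : ℝ × ℝ => z p.1 p.2) (x, t) (0, 1)

section helpers
variable {z : ℝ → ℝ → ℝ}

theorem hasDerivAt_px (hz : ContDiff ℝ (⊤ : ℕ∞) fun p' : ℝ × ℝ => z p'.1 p'.2) (x t : ℝ) :
    HasDerivAt (fun s => z s t) (px z x t) x := by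
  have h := ((hz.differentiable (by simp) (x, t)).hasFDerivAt).comp_hasDerivAt x
    ((hasDerivAt_id x).prodMk (hasDerivAt_const x t))
  exact h

theorem hasDerivAt_pt (hz : ContDiff ℝ (⊤ : ℕ∞) fun p' : ℝ × ℝ => z p'.1 p'.2) (x t : ℝ) :
    HasDerivAt (fun s => z x s) (pt z x t) t := by
  have h := ((hz.differentiable (by simp) (x, t)).hasFDerivAt).comp_hasDerivAt t
    ((hasDerivAt_const t x).prodMk (hasDerivAt_id t))
  exact h

theorem contDiff_papply (hz : ContDiff ℝ (⊤ : ℕ∞) fun p' : ℝ × ℝ => z p'.1 p'.2) (v : ℝ × ℝ) :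
    ContDiff ℝ (⊤ : ℕ∞) (fun p' : ℝ × ℝ => fderiv ℝ (fun p : ℝ × ℝ => z p.1 p.2) p' v) :=
  (ContinuousLinearMap.apply ℝ ℝ v).contDiff.comp (hz.fderiv_right (by simp))

theorem contDiff_px (hz : ContDiff ℝ (⊤ : ℕ∞) fun p' : ℝ × ℝ => z p'.1 p'.2) :
    ContDiff ℝ (⊤ : ℕ∞) (fun p' : ℝ × ℝ => px z p'.1 p'.2) :=
  contDiff_papply hz (1, 0)

theorem contDiff_pt (hz : ContDiff ℝ (⊤ : ℕ∞) fun p' : ℝ × ℝ => z p'.1 p'.2) :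
    ContDiff ℝ (⊤ : ℕ∞) (fun p' : ℝ × ℝ => pt z p'.1 p'.2) :=
  contDiff_papply hz (0, 1)

theorem clairaut (hz : ContDiff ℝ (⊤ : ℕ∞) fun p' : ℝ × ℝ => z p'.1 p'.2) (x t : ℝ) :
    px (pt z) x t = pt (px z) x t := by
  set G : ℝ × ℝ → ℝ := fun p' => z p'.1 p'.2 with hGdef
  have hdf : Differentiable ℝ (fderiv ℝ G) :=
    (hz.fderiv_right (m := 1) (by exact WithTop.coe_le_coe.mpr (le_top : (((1 + 1 : ℕ) : ℕ∞)) ≤ ⊤))).differentiable one_ne_zero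
  have hf'' := (hdf (x, t)).hasFDerivAt
  have hsymm := second_derivative_symmetric
    (fun y => (hz.differentiable (by simp) y).hasFDerivAt) hf'' ((1:ℝ), (0:ℝ)) ((0:ℝ), (1:ℝ))
  have key : ∀ v w : ℝ × ℝ,
      fderiv ℝ (fun p : ℝ × ℝ => fderiv ℝ G p v) (x, t) w
        = fderiv ℝ (fderiv ℝ G) (x, t) w v := by
    intro v w
    have e1 : HasFDerivAt (fun p : ℝ × ℝ => fderiv ℝ G p v)
        ((ContinuousLinearMap.apply ℝ ℝ v).comp (fderiv ℝ (fderiv ℝ G) (x, t))) (x, t) :=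
      (ContinuousLinearMap.apply ℝ ℝ v).hasFDerivAt.comp _ hf''
    rw [e1.fderiv]; rfl
  have hl : px (pt z) x t
      = fderiv ℝ (fun p : ℝ × ℝ => fderiv ℝ G p ((0:ℝ),(1:ℝ))) (x, t) ((1:ℝ),(0:ℝ)) := by
    simp only [px, pt]; rfl
  have hr : pt (px z) x t
      = fderiv ℝ (fun p : ℝ × ℝ => fderiv ℝ G p ((1:ℝ),(0:ℝ))) (x, t) ((0:ℝ),(1:ℝ)) := by
    simp only [px, pt]; rfl
  rw [hl, hr, key, key]
  exact hsymm

end helpers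

set_option maxHeartbeats 1000000 in
lemma eq1_alg (m δ : ℝ) (p q : ℤ) (w a b A M : ℝ) (hm : m ≠ 0) (hq : (q:ℝ) ≠ 0)
    (hδ : δ = 1 ∨ δ = -1) (hw : 0 < w) :
    (δ * (p:ℝ) / m * (((2*p-q-1 : ℤ) : ℝ) * w ^ (2*p-q-1-1) * a) * a
        + δ * (p:ℝ) / m * w ^ (2*p-q-1) * A
      - (δ * (q:ℝ) / m * (((p-1 : ℤ) : ℝ) * w ^ (p-1-1) * a) * b
        + δ * (q:ℝ) / m * w ^ (p-1) * M))
    - (δ * (p:ℝ) / m * (((p-1 : ℤ) : ℝ) * w ^ (p-1-1) * b) * a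
        + δ * (p:ℝ) / m * w ^ (p-1) * M
      - (δ * (q:ℝ) / m * (((q-1 : ℤ) : ℝ) * w ^ (q-1-1) * b) * b
        + δ * (q:ℝ) / m * w ^ (q-1) *
          (-((p:ℝ)/(q:ℝ)) * w ^ (2*(p-q)) * A + ((p:ℝ)/(q:ℝ) + 1) * w ^ (p-q) * M
            - ((p:ℝ)/(q:ℝ)) * (2*(p:ℝ) - (q:ℝ) - 1) * w ^ (2*(p-q)-1) * a^2
            + (((p:ℝ)-1)*((p:ℝ)+(q:ℝ))/(q:ℝ)) * w ^ (p-q-1) * a * b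
            - ((q:ℝ)-1)*b^2/w + (δ*m^2/(q:ℝ))*w)))
    = w ^ q * m - w ^ p * 0 := by
  have hw' : w ≠ 0 := hw.ne'
  have h : ∀ e₁ e₂ : ℤ, w ^ (e₁ - e₂) = w ^ e₁ / w ^ e₂ := fun _ _ => zpow_sub₀ hw' _ _
  have h' : ∀ e₁ e₂ : ℤ, w ^ (e₁ + e₂) = w ^ e₁ * w ^ e₂ := fun _ _ => zpow_add₀ hw' _ _
  push_cast
  simp only [show (2*p : ℤ) = p + p from two_mul p,
    show (2*(p-q) : ℤ) = (p-q) + (p-q) from two_mul _, h, h', zpow_one]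
  have hu : w ^ p ≠ 0 := zpow_ne_zero _ hw'
  have hv : w ^ q ≠ 0 := zpow_ne_zero _ hw'
  rcases hδ with rfl | rfl <;>
  · field_simp
    ring

lemma eq2_alg (m δ : ℝ) (p q : ℤ) (w a b : ℝ) (hw : 0 < w) :
    (0:ℝ) - 0 =
      ((δ * (p:ℝ) / m) * w ^ (p - 1) * a - (δ * (q:ℝ) / m) * w ^ (q - 1) * b) * w ^ p
      - ((δ * (p:ℝ) / m) * w ^ (2 * p - q - 1) * a - (δ * (q:ℝ) / m) * w ^ (p - 1) * b) * w ^ q := by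
  have hw' : w ≠ 0 := hw.ne'
  have k1 : w ^ (p-1) * w ^ p = w ^ (2*p - q - 1) * w ^ q := by
    rw [← zpow_add₀ hw', ← zpow_add₀ hw']; congr 1; ring
  have k2 : w ^ (q-1) * w ^ p = w ^ (p-1) * w ^ q := by
    rw [← zpow_add₀ hw', ← zpow_add₀ hw']; congr 1; ring
  linear_combination -(δ * (p:ℝ) / m * a) * k1 + (δ * (q:ℝ) / m * b) * k2

lemma eq3_alg (m δ : ℝ) (p q : ℤ) (w a b : ℝ) (hm : m ≠ 0)
    (hδ : δ = 1 ∨ δ = -1) (hw : 0 < w) :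
    (p : ℝ) * w ^ (p - 1) * a - (q : ℝ) * w ^ (q - 1) * b
      = δ * (((δ * (p:ℝ) / m) * w ^ (p - 1) * a - (δ * (q:ℝ) / m) * w ^ (q - 1) * b) * m
        - ((δ * (p:ℝ) / m) * w ^ (2 * p - q - 1) * a - (δ * (q:ℝ) / m) * w ^ (p - 1) * b) * 0) := by
  rcases hδ with rfl | rfl <;> · field_simp; try ring

set_option maxHeartbeats 2000000 in
/-- Example 5.3: a two-integer-parameter family of equations describing
pss (δ=1) or ss (δ=−1); here `z^k` denotes integer powers of the positive function `z`. -/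
theorem example53_describes_pss_ss (m δ : ℝ) (p q : ℤ)
    (hm : m ≠ 0) (hq : q ≠ 0) (hδ : δ = 1 ∨ δ = -1)
    (z : ℝ → ℝ → ℝ) (hz : ContDiff ℝ (⊤ : ℕ∞) fun p' : ℝ × ℝ => z p'.1 p'.2)
    (hpos : ∀ x t, 0 < z x t)
    (hPDE : ∀ x t, Dt (Dt z) x t =
      -((p : ℝ) / (q : ℝ)) * z x t ^ (2 * (p - q)) * Dx (Dx z) x t
        + ((p : ℝ) / (q : ℝ) + 1) * z x t ^ (p - q) * Dt (Dx z) x t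
        - ((p : ℝ) / (q : ℝ)) * (2 * (p : ℝ) - (q : ℝ) - 1) * z x t ^ (2 * (p - q) - 1) * (Dx z x t) ^ 2
        + (((p : ℝ) - 1) * ((p : ℝ) + (q : ℝ)) / (q : ℝ)) * z x t ^ (p - q - 1) * Dx z x t * Dt z x t
        - ((q : ℝ) - 1) * (Dt z x t) ^ 2 / z x t
        + (δ * m ^ 2 / (q : ℝ)) * z x t) :
    let f11 : ℝ → ℝ → ℝ := fun x t =>
      (δ * (p : ℝ) / m) * z x t ^ (p - 1) * Dx z x t
        - (δ * (q : ℝ) / m) * z x t ^ (q - 1) * Dt z x t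
    let f12 : ℝ → ℝ → ℝ := fun x t =>
      (δ * (p : ℝ) / m) * z x t ^ (2 * p - q - 1) * Dx z x t
        - (δ * (q : ℝ) / m) * z x t ^ (p - 1) * Dt z x t
    let f21 : ℝ → ℝ → ℝ := fun _ _ => 0
    let f22 : ℝ → ℝ → ℝ := fun _ _ => m
    let f31 : ℝ → ℝ → ℝ := fun x t => z x t ^ q
    let f32 : ℝ → ℝ → ℝ := fun x t => z x t ^ p
    ∀ x t : ℝ,
      Dx f12 x t - Dt f11 x t = f31 x t * f22 x t - f32 x t * f21 x t ∧
      Dx f22 x t - Dt f21 x t = f11 x t * f32 x t - f12 x t * f31 x t ∧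
      Dx f32 x t - Dt f31 x t = δ * (f11 x t * f22 x t - f12 x t * f21 x t) := by
  intro f11 f12 f21 f22 f31 f32 x t
  have hDX : Dx z = px z := funext fun x => funext fun t => (hasDerivAt_px hz x t).deriv
  have hDT : Dt z = pt z := funext fun x => funext fun t => (hasDerivAt_pt hz x t).deriv
  have hzX := contDiff_px hz
  have hzT := contDiff_pt hz
  set w : ℝ := z x t with hwdef
  have hw0 : 0 < w := hpos x t
  have hw : w ≠ 0 := hw0.ne'
  set a : ℝ := px z x t with hadef
  set b : ℝ := pt z x t with hbdef
  set A : ℝ := px (px z) x t with hAdef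
  set M : ℝ := pt (px z) x t with hMdef
  set B : ℝ := pt (pt z) x t with hBdef
  have hz1 : HasDerivAt (fun s => z s t) a x := hasDerivAt_px hz x t
  have hz2 : HasDerivAt (fun s => z x s) b t := hasDerivAt_pt hz x t
  have hX1 : HasDerivAt (fun s => px z s t) A x := hasDerivAt_px hzX x t
  have hX2 : HasDerivAt (fun s => px z x s) M t := hasDerivAt_pt hzX x t
  have hT1 : HasDerivAt (fun s => pt z s t) M x := by
    have h := hasDerivAt_px hzT x t
    rwa [clairaut hz x t, ← hMdef] at h
  have hT2 : HasDerivAt (fun s => pt z x s) B t := hasDerivAt_pt hzT x t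
  have hzp1 : ∀ e : ℤ, HasDerivAt (fun s => z s t ^ e) ((e : ℝ) * w ^ (e - 1) * a) x := by
    intro e
    have h := (hasDerivAt_zpow e w (Or.inl hw)).comp x hz1
    exact h
  have hzp2 : ∀ e : ℤ, HasDerivAt (fun s => z x s ^ e) ((e : ℝ) * w ^ (e - 1) * b) t := by
    intro e
    have h := (hasDerivAt_zpow e w (Or.inl hw)).comp t hz2
    exact h
  have hp : B =
      -((p : ℝ) / (q : ℝ)) * w ^ (2 * (p - q)) * A
        + ((p : ℝ) / (q : ℝ) + 1) * w ^ (p - q) * M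
        - ((p : ℝ) / (q : ℝ)) * (2 * (p : ℝ) - (q : ℝ) - 1) * w ^ (2 * (p - q) - 1) * a ^ 2
        + (((p : ℝ) - 1) * ((p : ℝ) + (q : ℝ)) / (q : ℝ)) * w ^ (p - q - 1) * a * b
        - ((q : ℝ) - 1) * b ^ 2 / w
        + (δ * m ^ 2 / (q : ℝ)) * w := by
    have h := hPDE x t
    rw [hDX, hDT] at h
    rw [show Dt (pt z) x t = B from hT2.deriv, show Dx (px z) x t = A from hX1.deriv,
      show Dt (px z) x t = M from hX2.deriv] at h
    exact h
  have hq' : (q : ℝ) ≠ 0 := Int.cast_ne_zero.mpr hq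
  refine ⟨?_, ?_, ?_⟩
  · -- first structure equation
    show Dx f12 x t - Dt f11 x t = z x t ^ q * m - z x t ^ p * 0
    have e12 : Dx f12 x t
        = (δ * (p : ℝ) / m * ((((2*p-q-1 : ℤ) : ℝ)) * w ^ (2*p-q-1-1) * a) * a
            + δ * (p : ℝ) / m * w ^ (2*p-q-1) * A)
          - (δ * (q : ℝ) / m * ((((p-1 : ℤ) : ℝ)) * w ^ (p-1-1) * a) * b
            + δ * (q : ℝ) / m * w ^ (p-1) * M) := by
      have hfun : (fun s => f12 s t) = fun s =>
          (δ * (p : ℝ) / m) * z s t ^ (2 * p - q - 1) * px z s t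
            - (δ * (q : ℝ) / m) * z s t ^ (p - 1) * pt z s t := by
        funext s
        show (δ * (p : ℝ) / m) * z s t ^ (2 * p - q - 1) * Dx z s t
            - (δ * (q : ℝ) / m) * z s t ^ (p - 1) * Dt z s t = _
        rw [hDX, hDT]
      have h : HasDerivAt (fun s =>
          (δ * (p : ℝ) / m) * z s t ^ (2 * p - q - 1) * px z s t
            - (δ * (q : ℝ) / m) * z s t ^ (p - 1) * pt z s t) _ x :=
        (((hzp1 (2*p-q-1)).const_mul (δ * (p : ℝ) / m)).mul hX1).sub
          (((hzp1 (p-1)).const_mul (δ * (q : ℝ) / m)).mul hT1)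
      show deriv (fun s => f12 s t) x = _
      rw [hfun, h.deriv]
    have e11 : Dt f11 x t
        = (δ * (p : ℝ) / m * ((((p-1 : ℤ) : ℝ)) * w ^ (p-1-1) * b) * a
            + δ * (p : ℝ) / m * w ^ (p-1) * M)
          - (δ * (q : ℝ) / m * ((((q-1 : ℤ) : ℝ)) * w ^ (q-1-1) * b) * b
            + δ * (q : ℝ) / m * w ^ (q-1) * B) := by
      have hfun : (fun s => f11 x s) = fun s =>
          (δ * (p : ℝ) / m) * z x s ^ (p - 1) * px z x s
            - (δ * (q : ℝ) / m) * z x s ^ (q - 1) * pt z x s := by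
        funext s
        show (δ * (p : ℝ) / m) * z x s ^ (p - 1) * Dx z x s
            - (δ * (q : ℝ) / m) * z x s ^ (q - 1) * Dt z x s = _
        rw [hDX, hDT]
      have h : HasDerivAt (fun s =>
          (δ * (p : ℝ) / m) * z x s ^ (p - 1) * px z x s
            - (δ * (q : ℝ) / m) * z x s ^ (q - 1) * pt z x s) _ t :=
        (((hzp2 (p-1)).const_mul (δ * (p : ℝ) / m)).mul hX2).sub
          (((hzp2 (q-1)).const_mul (δ * (q : ℝ) / m)).mul hT2)
      show deriv (fun s => f11 x s) t = _
      rw [hfun, h.deriv]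
    rw [e12, e11, hp]
    exact eq1_alg m δ p q w a b A M hm hq' hδ hw0
  · -- second structure equation
    have h1 : Dx f22 x t = 0 := deriv_const x m
    have h2 : Dt f21 x t = 0 := deriv_const t 0
    rw [h1, h2]
    show (0:ℝ) - 0 =
      ((δ * (p : ℝ) / m) * z x t ^ (p - 1) * Dx z x t
        - (δ * (q : ℝ) / m) * z x t ^ (q - 1) * Dt z x t) * z x t ^ p
      - ((δ * (p : ℝ) / m) * z x t ^ (2 * p - q - 1) * Dx z x t
        - (δ * (q : ℝ) / m) * z x t ^ (p - 1) * Dt z x t) * z x t ^ q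
    rw [hDX, hDT]
    exact eq2_alg m δ p q w a b hw0
  · -- third structure equation
    have h1 : Dx f32 x t = (p : ℝ) * w ^ (p - 1) * a := (hzp1 p).deriv
    have h2 : Dt f31 x t = (q : ℝ) * w ^ (q - 1) * b := (hzp2 q).deriv
    rw [h1, h2]
    show (p : ℝ) * w ^ (p - 1) * a - (q : ℝ) * w ^ (q - 1) * b
      = δ * (((δ * (p : ℝ) / m) * z x t ^ (p - 1) * Dx z x t
          - (δ * (q : ℝ) / m) * z x t ^ (q - 1) * Dt z x t) * m
        - ((δ * (p : ℝ) / m) * z x t ^ (2 * p - q - 1) * Dx z x t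
          - (δ * (q : ℝ) / m) * z x t ^ (p - 1) * Dt z x t) * 0)
    rw [hDX, hDT]
    exact eq3_alg m δ p q w a b hm hδ hw0
end
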